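/- arXiv:1602.08023 — 8 statements merged into one kernel-verified Lean document; each statement's English description precedes it below -/
import Mathlib

section
/- Let I be a facility assignment instance with n agents and facilities of total capacity at least n on a metric space. For any ordering of the agents and any tie-breaking, the assignment S produced by Serial Dictatorship on I satisfies SC(S, I) ≤ (2^n − 1) · SC_OPT(I), where SC_OPT(I) is the minimum social cost of any capacity-respecting assignment of agents to facilities on I. -/
/-- A facility assignment instance: `n` agents with most-preferred points `A`,
`m` facilities at points `F` with capacities `c`. -/
structure FAInstance (X : Type*) (n m : ℕ) where
  A : Fin n → X
  F : Fin m → X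
  c : Fin m → ℕ

/-- An assignment is valid if no facility receives more agents than its capacity. -/
def ValidAssignment {X : Type*} {n m : ℕ} (I : FAInstance X n m)
    (S : Fin n → Fin m) : Prop :=
  ∀ j : Fin m, (Finset.univ.filter (fun i => S i = j)).card ≤ I.c j

/-- The social cost of an assignment: the sum of agents' distances to their facilities. -/
noncomputable def socialCost {X : Type*} [MetricSpace X] {n m : ℕ}
    (I : FAInstance X n m) (S : Fin n → Fin m) : ℝ :=
  ∑ i, dist (I.A i) (I.F (S i))

/-- The `g`-augmented instance: every capacity is multiplied by `g`. -/
def FAInstance.augment {X : Type*} {n m : ℕ} (I : FAInstance X n m) (g : ℕ) :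
    FAInstance X n m :=
  ⟨I.A, I.F, fun j => g * I.c j⟩

/-- `S` is an outcome of Serial Dictatorship run with the ordering `σ`
(`σ t` is the agent served at time `t`): the assignment is valid, and each agent is
assigned to a facility at minimum distance among the facilities that still have
residual capacity when her turn comes. -/
def IsSDWithOrder {X : Type*} [MetricSpace X] {n m : ℕ} (I : FAInstance X n m)
    (σ : Equiv.Perm (Fin n)) (S : Fin n → Fin m) : Prop :=
  ValidAssignment I S ∧
  ∀ t : Fin n, ∀ j : Fin m,
    (Finset.univ.filter (fun s : Fin n => s < t ∧ S (σ s) = j)).card < I.c j →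
    dist (I.A (σ t)) (I.F (S (σ t))) ≤ dist (I.A (σ t)) (I.F j)

/-- `S` is an outcome of Serial Dictatorship for some ordering of the agents
and some tie-breaking. -/
def IsSDAssignment {X : Type*} [MetricSpace X] {n m : ℕ} (I : FAInstance X n m)
    (S : Fin n → Fin m) : Prop :=
  ∃ σ : Equiv.Perm (Fin n), IsSDWithOrder I σ S


/-!
Induct on the agents in the order in which Serial Dictatorship serves them. The first agent
takes a facility `j` no farther than her optimal one, so `d₀ := d(A₀, F j) ≤ OPT`. Modify the
optimum so that agent `0` also sits at `j`: if `j` is full, swap agent `0` with an agent `b`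
seated at `j`; by the triangle inequality this costs at most `2 d₀` more. Dropping agent `0`
and one seat of `j` leaves an instance on which SD continues, whose optimum is at most
`OPT + d₀`. Hence `SD ≤ d₀ + (2ⁿ - 1)(OPT + d₀) ≤ (2ⁿ⁺¹ - 1) OPT`.
-/

open Finset Function

theorem Finset.sum_apply_update_add {α β M : Type*} [Fintype α] [DecidableEq α]
    [AddCommMonoid M] (h : α → β → M) (f : α → β) (i : α) (b : β) :
    ∑ x, h x (update f i b x) + h i (f i) = ∑ x, h x (f x) + h i b := by
  rw [← add_sum_erase _ _ (mem_univ i), ← add_sum_erase _ _ (mem_univ i), update_self,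
    sum_congr rfl fun x hx => by rw [update_of_ne (ne_of_mem_erase hx)]]
  abel

theorem Finset.card_filter_update_add {α β : Type*} [Fintype α] [DecidableEq α]
    [DecidableEq β] (f : α → β) (i : α) (b j : β) :
    #{x | update f i b x = j} + (if f i = j then 1 else 0)
      = #{x | f x = j} + (if b = j then 1 else 0) := by
  simp only [card_filter]
  exact sum_apply_update_add (fun _ y => if y = j then 1 else 0) f i b

theorem Finset.card_filter_comp_perm {α β : Type*} [Fintype α] (f : α → β) (σ : Equiv.Perm α)
    (p : β → Prop) [DecidablePred p] : #{x | p (f (σ x))} = #{x | p (f x)} := by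
  simp only [card_filter]
  exact Equiv.sum_comp σ fun x => if p (f x) then 1 else 0

namespace FAInstance

variable {X : Type*} {n m : ℕ}

/-- The instance faced by agents `1, …, n` once agent `0` has taken a seat at facility `j`. -/
def residual (I : FAInstance X (n + 1) m) (j : Fin m) : FAInstance X n m :=
  ⟨Fin.tail I.A, I.F, update I.c j (I.c j - 1)⟩

def permute (I : FAInstance X n m) (σ : Equiv.Perm (Fin n)) : FAInstance X n m :=
  ⟨I.A ∘ σ, I.F, I.c⟩

end FAInstance

open FAInstance

section Assignments

variable {X : Type*} {n m : ℕ}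

theorem ValidAssignment.comp_perm {I : FAInstance X n m} {f : Fin n → Fin m}
    (hf : ValidAssignment I f) (σ : Equiv.Perm (Fin n)) : ValidAssignment I (f ∘ σ) := fun j =>
  (card_filter_comp_perm f σ (· = j)).trans_le (hf j)

theorem ValidAssignment.capacity_pos {I : FAInstance X n m} {f : Fin n → Fin m}
    (hf : ValidAssignment I f) (i : Fin n) : 0 < I.c (f i) :=
  (card_pos.mpr ⟨i, by simp⟩).trans_le (hf (f i))

theorem ValidAssignment.update_of_card_lt {I : FAInstance X n m} {f : Fin n → Fin m}
    (hf : ValidAssignment I f) (i : Fin n) {j : Fin m} (hj : #{x | f x = j} < I.c j) :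
    ValidAssignment I (update f i j) := by
  intro k
  have hcount := card_filter_update_add f i j k
  have hk := hf k
  split_ifs at hcount <;> subst_vars <;> omega

theorem ValidAssignment.residual {I : FAInstance X (n + 1) m} {f : Fin (n + 1) → Fin m}
    (hf : ValidAssignment I f) : ValidAssignment (I.residual (f 0)) (Fin.tail f) := by
  intro j
  have hj : (if f 0 = j then 1 else 0) + #{i | Fin.tail f i = j} ≤ I.c j :=
    (Fin.card_filter_univ_succ' _).symm.trans_le (hf j)
  by_cases hfj : f 0 = j
  · subst hfj
    simp only [FAInstance.residual, update_self, if_true] at hj ⊢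
    omega
  · simp only [FAInstance.residual, update_of_ne (Ne.symm hfj), if_neg hfj] at hj ⊢
    omega

end Assignments

section SocialCost

variable {X : Type*} [MetricSpace X] {n m : ℕ}

theorem dist_le_socialCost (I : FAInstance X n m) (f : Fin n → Fin m) (i : Fin n) :
    dist (I.A i) (I.F (f i)) ≤ socialCost I f :=
  single_le_sum (f := fun i => dist (I.A i) (I.F (f i))) (fun _ _ => dist_nonneg) (mem_univ i)

theorem socialCost_update_add (I : FAInstance X n m) (f : Fin n → Fin m) (i : Fin n)
    (j : Fin m) :
    socialCost I (update f i j) + dist (I.A i) (I.F (f i))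
      = socialCost I f + dist (I.A i) (I.F j) :=
  sum_apply_update_add (fun x y => dist (I.A x) (I.F y)) f i j

theorem socialCost_permute (I : FAInstance X n m) (σ : Equiv.Perm (Fin n))
    (f : Fin n → Fin m) : socialCost (I.permute σ) (f ∘ σ) = socialCost I f :=
  Equiv.sum_comp σ fun i => dist (I.A i) (I.F (f i))

theorem socialCost_eq_dist_add_residual (I : FAInstance X (n + 1) m) (j : Fin m)
    (f : Fin (n + 1) → Fin m) :
    socialCost I f = dist (I.A 0) (I.F (f 0)) + socialCost (I.residual j) (Fin.tail f) :=
  Fin.sum_univ_succ _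

/-- By the triangle inequality through `F (f b)` and `A i`,
`d(A b, F (f i)) ≤ d(A b, F (f b)) + d(A i, F (f b)) + d(A i, F (f i))`, and the last term
cancels agent `i`'s old cost. -/
theorem socialCost_comp_swap_le (I : FAInstance X n m) (f : Fin n → Fin m) (i b : Fin n) :
    socialCost I (f ∘ Equiv.swap i b)
      ≤ socialCost I f + 2 * dist (I.A i) (I.F (f b)) := by
  have hb := socialCost_update_add I f b (f i)
  have hi := socialCost_update_add I (update f b (f i)) i (f b)
  have htri : dist (I.A b) (I.F (f i))
      ≤ dist (I.A b) (I.F (f b)) + dist (I.F (f b)) (I.A i) + dist (I.A i) (I.F (f i)) :=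
    dist_triangle4 _ _ _ _
  rw [Equiv.comp_swap_eq_update]
  by_cases hib : i = b
  · subst hib
    simp only [update_eq_self] at hi ⊢
    linarith [dist_nonneg (x := I.A i) (y := I.F (f i))]
  · rw [update_of_ne hib] at hi
    rw [dist_comm (I.F (f b))] at htri
    linarith [dist_nonneg (x := I.A i) (y := I.F (f i))]

theorem ValidAssignment.exists_reseat {I : FAInstance X n m} {f : Fin n → Fin m}
    (hf : ValidAssignment I f) (i : Fin n) {j : Fin m} (hj : 0 < I.c j) :
    ∃ g : Fin n → Fin m, ValidAssignment I g ∧ g i = j ∧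
      socialCost I g ≤ socialCost I f + 2 * dist (I.A i) (I.F j) := by
  by_cases hfull : #{x | f x = j} < I.c j
  · refine ⟨update f i j, hf.update_of_card_lt i hfull, update_self .., ?_⟩
    linarith [socialCost_update_add I f i j, dist_nonneg (x := I.A i) (y := I.F (f i)),
      dist_nonneg (x := I.A i) (y := I.F j)]
  · obtain ⟨b, hb⟩ : ∃ b, f b = j := by
      obtain ⟨b, hb⟩ := card_pos.mp (hj.trans_le (not_lt.mp hfull))
      exact ⟨b, (mem_filter.mp hb).2⟩
    refine ⟨f ∘ Equiv.swap i b, hf.comp_perm _, by simp [hb], ?_⟩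
    simpa [hb] using socialCost_comp_swap_le I f i b

end SocialCost

section SerialDictatorship

variable {X : Type*} [MetricSpace X] {n m : ℕ}

theorem IsSDWithOrder.permute {I : FAInstance X n m} {σ : Equiv.Perm (Fin n)}
    {S : Fin n → Fin m} (hS : IsSDWithOrder I σ S) : IsSDWithOrder (I.permute σ) 1 (S ∘ σ) :=
  ⟨hS.1.comp_perm σ, hS.2⟩

theorem IsSDWithOrder.dist_first_le {I : FAInstance X (n + 1) m} {S : Fin (n + 1) → Fin m}
    (hS : IsSDWithOrder I 1 S) {j : Fin m} (hj : 0 < I.c j) :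
    dist (I.A 0) (I.F (S 0)) ≤ dist (I.A 0) (I.F j) :=
  hS.2 0 j (by simpa using hj)

theorem IsSDWithOrder.residual {I : FAInstance X (n + 1) m} {S : Fin (n + 1) → Fin m}
    (hS : IsSDWithOrder I 1 S) : IsSDWithOrder (I.residual (S 0)) 1 (Fin.tail S) := by
  refine ⟨hS.1.residual, fun t j ht => hS.2 t.succ j ?_⟩
  have hcount : #{s | s < t.succ ∧ S s = j}
      = (if S 0 = j then 1 else 0) + #{s | s < t ∧ Fin.tail S s = j} := by
    rw [Fin.card_filter_univ_succ']
    simp only [Fin.succ_pos, true_and, Fin.succ_lt_succ_iff, Fin.tail]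
    rfl
  change #{s | s < t ∧ Fin.tail S s = j} < (I.residual (S 0)).c j at ht
  refine hcount.trans_lt ?_
  by_cases hj : S 0 = j
  · subst hj
    simp only [FAInstance.residual, update_self, if_true] at ht ⊢
    omega
  · simp only [FAInstance.residual, update_of_ne (Ne.symm hj), if_neg hj] at ht ⊢
    omega

theorem socialCost_le_of_isSDWithOrder_one {I : FAInstance X n m} {S O : Fin n → Fin m}
    (hS : IsSDWithOrder I 1 S) (hO : ValidAssignment I O) :
    socialCost I S ≤ (2 ^ n - 1) * socialCost I O := by
  induction n with
  | zero => simp [socialCost]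
  | succ n ih =>
    set d₀ := dist (I.A 0) (I.F (S 0))
    have hd₀ : d₀ ≤ socialCost I O :=
      (hS.dist_first_le (hO.capacity_pos 0)).trans (dist_le_socialCost I O 0)
    obtain ⟨O', hO'valid, hO'0, hO'cost⟩ := hO.exists_reseat 0 (hS.1.capacity_pos 0)
    have hres : socialCost (I.residual (S 0)) (Fin.tail O') ≤ socialCost I O + d₀ := by
      have hsplit := socialCost_eq_dist_add_residual I (S 0) O'
      rw [hO'0] at hsplit
      linarith
    have hrec := ih hS.residual (hO'0 ▸ hO'valid.residual)
    have hpow : (1 : ℝ) ≤ 2 ^ n := one_le_pow₀ one_le_two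
    calc socialCost I S = d₀ + socialCost (I.residual (S 0)) (Fin.tail S) :=
          socialCost_eq_dist_add_residual I (S 0) S
      _ ≤ d₀ + (2 ^ n - 1) * (socialCost I O + d₀) := by
        gcongr
        exact hrec.trans (mul_le_mul_of_nonneg_left hres (by linarith))
      _ = 2 ^ n * d₀ + (2 ^ n - 1) * socialCost I O := by ring
      _ ≤ 2 ^ n * socialCost I O + (2 ^ n - 1) * socialCost I O := by gcongr
      _ = (2 ^ (n + 1) - 1) * socialCost I O := by ring

end SerialDictatorship

theorem sd_approx_no_augmentation_general {X : Type*} [MetricSpace X] {n m : ℕ}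
    (I : FAInstance X n m)
    (S : Fin n → Fin m) (hS : IsSDAssignment I S)
    (O : Fin n → Fin m) (hO : ValidAssignment I O) :
    socialCost I S ≤ (2 ^ n - 1) * socialCost I O := by
  obtain ⟨σ, hσ⟩ := hS
  rw [← socialCost_permute I σ S, ← socialCost_permute I σ O]
  exact socialCost_le_of_isSDWithOrder_one hσ.permute (hO.comp_perm σ)

/-- Serial Dictatorship without resource augmentation has approximation ratio at most
`2 ^ n − 1` on facility assignment instances with `n` agents. -/
theorem sd_approx_no_augmentation {X : Type*} [MetricSpace X] {n m : ℕ}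
    (I : FAInstance X n m) (hcap : n ≤ ∑ j, I.c j)
    (S : Fin n → Fin m) (hS : IsSDAssignment I S)
    (O : Fin n → Fin m) (hO : ValidAssignment I O) :
    socialCost I S ≤ (2 ^ n - 1) * socialCost I O :=
  sd_approx_no_augmentation_general I S hS O hO
end

section
/- Let g ≥ 3 be an integer, let I be a facility assignment instance, and let I_g be the g-augmented instance obtained from I by multiplying every facility capacity by g. For any ordering of the agents and any tie-breaking, the assignment S produced by Serial Dictatorship on I_g satisfies SC(S, I_g) ≤ (g/(g−2)) · SC_OPT(I), where SC_OPT(I) is the minimum social cost of any assignment on the original instance I. -/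
/-!
Let `S` be the SD outcome on the augmented instance and `O` a valid assignment of the
original one. Some facility is not full at the end of SD, so every agent `i` has an
*escape cost* `h i`, her distance to the nearest facility that is not full; since a facility
that is not full at the end was not full at her turn, `dist (A i) (F (S i)) ≤ h i`.
If `O i` is not full then `h i ≤ dist (A i) (F (O i))`. If it is full, it holds `g c` agents
of `S`, and going from `A i` through `F (O i)` to any such agent `i'` and on to her escape
facility gives `h i ≤ dist (A i) (F (O i)) + dist (A i') (F (S i')) + h i'`; averaging over
these `g c` agents and summing over the at most `c` agents `O` sends there yields
`g (H - OPT) ≤ SD + H ≤ 2 H`, where `H = ∑ h`. Hence `SD ≤ H ≤ g / (g - 2) · OPT`.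
-/

open Finset

lemma mul_sum_le_sum_of_forall_le {α β K : Type*} [CommRing K] [LinearOrder K]
    [IsStrictOrderedRing K] {s : Finset α} {t : Finset β} {x : α → K} {y : β → K} {g c : ℕ}
    (hs : #s ≤ c) (ht : #t = g * c) (hy : ∀ j ∈ t, 0 ≤ y j)
    (hxy : ∀ i ∈ s, ∀ j ∈ t, x i ≤ y j) :
    g * ∑ i ∈ s, x i ≤ ∑ j ∈ t, y j := by
  have hY : 0 ≤ ∑ j ∈ t, y j := sum_nonneg hy
  obtain rfl | ⟨i₀, hi₀⟩ := s.eq_empty_or_nonempty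
  · simpa using hY
  have hc : (0 : K) < c := by exact_mod_cast (card_pos.2 ⟨i₀, hi₀⟩).trans_le hs
  have h_each (i : α) (hi : i ∈ s) : (g * c : K) * x i ≤ ∑ j ∈ t, y j := by
    simpa [ht] using card_nsmul_le_sum t y (x i) (hxy i hi)
  refine le_of_mul_le_mul_left ?_ hc
  calc (c : K) * (g * ∑ i ∈ s, x i) = ∑ i ∈ s, (g * c : K) * x i := by
        rw [mul_sum, mul_sum]; exact sum_congr rfl fun _ _ => by ring
    _ ≤ ∑ _i ∈ s, ∑ j ∈ t, y j := sum_le_sum h_each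
    _ = #s * ∑ j ∈ t, y j := by rw [sum_const, nsmul_eq_mul]
    _ ≤ c * ∑ j ∈ t, y j := by gcongr

section Greedy

variable {ι κ X : Type*} [Fintype ι] [DecidableEq κ]

def load (S : ι → κ) (k : κ) : ℕ := #{i | S i = k}

lemma sum_load [Fintype κ] (S : ι → κ) : ∑ k, load S k = Fintype.card ι :=
  (card_eq_sum_card_fiberwise fun i _ => mem_univ (S i)).symm

lemma exists_load_lt [Fintype κ] [Nonempty ι] {S O : ι → κ} {c : κ → ℕ} {g : ℕ} (hg : 1 < g)
    (hS : ∀ k, load S k ≤ g * c k) (hO : ∀ k, load O k ≤ c k) :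
    ∃ k, load S k < g * c k := by
  by_contra! hfull
  have h_eq : Fintype.card ι = g * ∑ k, c k := by
    rw [← sum_load S, mul_sum]
    exact sum_congr rfl fun k _ => (hS k).antisymm (hfull k)
  have h_le : Fintype.card ι ≤ ∑ k, c k := sum_load O ▸ sum_le_sum fun k _ => hO k
  have : 0 < Fintype.card ι := Fintype.card_pos
  nlinarith

variable [PseudoMetricSpace X] {a : ι → X} {f : κ → X} {S O e : ι → κ} {c : κ → ℕ} {g : ℕ}

lemma mul_sum_escape_sub_le (hS : ∀ k, load S k ≤ g * c k) (hO : ∀ k, load O k ≤ c k)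
    (he_mem : ∀ i, load S (e i) < g * c (e i))
    (he_min : ∀ i k, load S k < g * c k → dist (a i) (f (e i)) ≤ dist (a i) (f k)) (k : κ) :
    g * ∑ i ∈ {i | O i = k}, (dist (a i) (f (e i)) - dist (a i) (f (O i))) ≤
      ∑ i ∈ {i | S i = k}, (dist (a i) (f (S i)) + dist (a i) (f (e i))) := by
  have hy : ∀ i ∈ ({i | S i = k} : Finset ι),
      0 ≤ dist (a i) (f (S i)) + dist (a i) (f (e i)) := fun _ _ => by positivity
  by_cases hk : load S k < g * c k
  · calc (g : ℝ) * ∑ i ∈ {i | O i = k}, (dist (a i) (f (e i)) - dist (a i) (f (O i)))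
          ≤ g * 0 := by
            gcongr
            refine sum_nonpos fun i hi => sub_nonpos.2 ?_
            rw [(mem_filter.1 hi).2]
            exact he_min i k hk
      _ ≤ _ := by rw [mul_zero]; exact sum_nonneg hy
  · refine mul_sum_le_sum_of_forall_le (hO k) ((hS k).antisymm (not_lt.1 hk)) hy ?_
    intro i hi i' hi'
    rw [(mem_filter.1 hi).2, ← (mem_filter.1 hi').2]
    have := dist_triangle4 (a i) (f (S i')) (a i') (f (e i'))
    have := he_min i (e i') (he_mem i')
    have := dist_comm (f (S i')) (a i')
    linarith

theorem sum_dist_le_of_forall_dist_le_of_load_lt [Fintype κ] (hg : 2 < g)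
    (hS : ∀ k, load S k ≤ g * c k) (hO : ∀ k, load O k ≤ c k)
    (hgreedy : ∀ i k, load S k < g * c k → dist (a i) (f (S i)) ≤ dist (a i) (f k)) :
    ∑ i, dist (a i) (f (S i)) ≤ (g / (g - 2) : ℝ) * ∑ i, dist (a i) (f (O i)) := by
  cases isEmpty_or_nonempty ι
  · simp
  have h_escape (i : ι) : ∃ k ∈ ({k | load S k < g * c k} : Finset κ),
      ∀ k' ∈ ({k | load S k < g * c k} : Finset κ), dist (a i) (f k) ≤ dist (a i) (f k') := by
    obtain ⟨k, hk⟩ := exists_load_lt (by omega) hS hO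
    exact exists_min_image _ _ ⟨k, mem_filter.2 ⟨mem_univ k, hk⟩⟩
  choose e he_mem he_min using h_escape
  simp only [mem_filter, mem_univ, true_and] at he_mem he_min
  set D := ∑ i, dist (a i) (f (S i))
  set H := ∑ i, dist (a i) (f (e i))
  set OPT := ∑ i, dist (a i) (f (O i))
  have hDH : D ≤ H := sum_le_sum fun i _ => hgreedy i (e i) (he_mem i)
  have hHO : g * (H - OPT) ≤ D + H := by
    calc (g : ℝ) * (H - OPT)
        = ∑ k, g * ∑ i ∈ {i | O i = k}, (dist (a i) (f (e i)) - dist (a i) (f (O i))) := by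
          rw [← mul_sum, sum_fiberwise, sum_sub_distrib]
      _ ≤ ∑ k, ∑ i ∈ {i | S i = k}, (dist (a i) (f (S i)) + dist (a i) (f (e i))) :=
          sum_le_sum fun k _ => mul_sum_escape_sub_le hS hO he_mem he_min k
      _ = D + H := by rw [sum_fiberwise, sum_add_distrib]
  have hg' : (0 : ℝ) < g - 2 := by
    have : (2 : ℝ) < g := by exact_mod_cast hg
    linarith
  rw [div_mul_eq_mul_div, le_div_iff₀ hg']
  nlinarith

end Greedy

lemma IsSDWithOrder.dist_le_of_load_lt {X : Type*} [MetricSpace X] {n m : ℕ}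
    {I : FAInstance X n m} {σ : Equiv.Perm (Fin n)} {S : Fin n → Fin m}
    (hS : IsSDWithOrder I σ S) (i : Fin n) (k : Fin m) (hk : load S k < I.c k) :
    dist (I.A i) (I.F (S i)) ≤ dist (I.A i) (I.F k) := by
  have h_before : #{s | s < σ.symm i ∧ S (σ s) = k} ≤ load S k :=
    card_le_card_of_injOn σ (fun s hs => by simp_all) σ.injective.injOn
  simpa using hS.2 (σ.symm i) k (h_before.trans_lt hk)

theorem sd_approx_augmentation_g_general {X : Type*} [MetricSpace X] {n m : ℕ}
    (g : ℕ) (hg : 3 ≤ g)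
    (I : FAInstance X n m)
    (S : Fin n → Fin m) (hS : IsSDAssignment (I.augment g) S)
    (O : Fin n → Fin m) (hO : ValidAssignment I O) :
    socialCost (I.augment g) S ≤ ((g : ℝ) / ((g : ℝ) - 2)) * socialCost I O := by
  obtain ⟨σ, hSD⟩ := hS
  exact sum_dist_le_of_forall_dist_le_of_load_lt hg hSD.1 hO hSD.dist_le_of_load_lt

/-- For any integer augmentation factor `g ≥ 3`, Serial Dictatorship has approximation
ratio at most `g / (g − 2)`: its social cost on the `g`-augmented instance is at most
`g / (g − 2)` times the optimal social cost on the original instance. -/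
theorem sd_approx_augmentation_g {X : Type*} [MetricSpace X] {n m : ℕ}
    (g : ℕ) (hg : 3 ≤ g)
    (I : FAInstance X n m) (hcap : n ≤ ∑ j, I.c j)
    (S : Fin n → Fin m) (hS : IsSDAssignment (I.augment g) S)
    (O : Fin n → Fin m) (hO : ValidAssignment I O) :
    socialCost (I.augment g) S ≤ ((g : ℝ) / ((g : ℝ) - 2)) * socialCost I O :=
  sd_approx_augmentation_g_general g hg I S hS O hO
end

section
/- Let g ≥ 2 be an integer, let I be a facility assignment instance with an optimal assignment O, and let S be an assignment produced by Serial Dictatorship applied to the g-augmented instance I_g, such that the triplet (I, O, S) is represented as a directed g-tree T. If T has a path covering x, then SC(S, I_g) ≤ c(x) · SC(O, I), where c(x) is the cost of the path covering x. -/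
/-- In-degree of node `v` in the representation graph of `(O, S)`:
the number of agents assigned to facility `v` by `S`. -/
def inDeg {n m : ℕ} (S : Fin n → Fin m) (v : Fin m) : ℕ :=
  (Finset.univ.filter (fun i => S i = v)).card

/-- Out-degree of node `v` in the representation graph of `(O, S)`:
the number of agents assigned to facility `v` by `O`. -/
def outDeg {n m : ℕ} (O : Fin n → Fin m) (v : Fin m) : ℕ :=
  (Finset.univ.filter (fun i => O i = v)).card

/-- The representation graph of `(O, S)` (edge `i` goes from `O i` to `S i`)
has no directed cycle (no closed directed walk). -/
def NoDirectedCycle {n m : ℕ} (O S : Fin n → Fin m) : Prop :=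
  ∀ (t : ℕ) (f : Fin (t + 1) → Fin n), ¬ (∀ j, S (f j) = O (f (j + 1)))

/-- The representation graph of `(O, S)` is a directed `g`-tree: it is acyclic,
has a root of in-degree 1 and out-degree 0, and every other node has out-degree 1 and
in-degree either 0 (a leaf) or `g` (an intermediate node). -/
def IsDirectedGTree {n m : ℕ} (g : ℕ) (O S : Fin n → Fin m) : Prop :=
  NoDirectedCycle O S ∧
  ∃ r : Fin m, inDeg S r = 1 ∧ outDeg O r = 0 ∧
    ∀ v : Fin m, v ≠ r → outDeg O v = 1 ∧ (inDeg S v = 0 ∨ inDeg S v = g)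
/-- An index for a directed path in a representation graph with `n` edges (agents):
a nonempty sequence of at most `n` edges, given as `⟨t, p⟩` where the path consists of
the `t + 1` edges `p 0, p 1, …, p t`. -/
abbrev PathIdx (n : ℕ) := Σ t : Fin n, (Fin ((t : ℕ) + 1) → Fin n)

/-- `p` is a genuine directed path of the representation graph of `(O, S)`
originating from a leaf: consecutive edges are incident
(the head `S` of each edge is the tail `O` of the next one), and the tail of the
first edge is a leaf, i.e. has in-degree 0. -/
def IsLeafPath {n m : ℕ} (O S : Fin n → Fin m) (p : PathIdx n) : Prop :=
  (∀ j : Fin (p.1 : ℕ), S (p.2 j.castSucc) = O (p.2 j.succ)) ∧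
  ∀ i : Fin n, S i ≠ O (p.2 0)

/-- The path `p` crosses the edge `e`. -/
def Crosses {n : ℕ} (p : PathIdx n) (e : Fin n) : Prop := ∃ j, p.2 j = e

/-- The path `p` terminates with the edge `e`. -/
def EndsAt {n : ℕ} (p : PathIdx n) (e : Fin n) : Prop :=
  p.2 (Fin.last (p.1 : ℕ)) = e

/-- `e` is the edge incident to the root: no edge goes out of its head. -/
def IsRootEdge {n m : ℕ} (O S : Fin n → Fin m) (e : Fin n) : Prop :=
  ∀ i, O i ≠ S e

instance {n m : ℕ} (O S : Fin n → Fin m) : DecidablePred (IsLeafPath O S) := fun p => by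
  unfold IsLeafPath; infer_instance

instance {n : ℕ} (p : PathIdx n) (e : Fin n) : Decidable (Crosses p e) := by
  unfold Crosses; infer_instance

instance {n : ℕ} (p : PathIdx n) (e : Fin n) : Decidable (EndsAt p e) := by
  unfold EndsAt; infer_instance

/-- `∑_{p ∈ 𝒫_e} x_p`: the total value of `x` over leaf-originating paths crossing `e`. -/
noncomputable def crossSum {n m : ℕ} (O S : Fin n → Fin m) (x : PathIdx n → ℝ)
    (e : Fin n) : ℝ :=
  ∑ p ∈ Finset.univ.filter (fun p => IsLeafPath O S p ∧ Crosses p e), x p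

/-- `∑_{p ∈ 𝒫̃_e} x_p`: the total value of `x` over leaf-originating paths terminating
with `e`. -/
noncomputable def endSum {n m : ℕ} (O S : Fin n → Fin m) (x : PathIdx n → ℝ)
    (e : Fin n) : ℝ :=
  ∑ p ∈ Finset.univ.filter (fun p => IsLeafPath O S p ∧ EndsAt p e), x p

/-- `∑_{p ∈ 𝒫_e ∩ 𝒫_f} x_p`: the total value of `x` over leaf-originating paths crossing
both `e` and `f`. -/
noncomputable def crossBothSum {n m : ℕ} (O S : Fin n → Fin m) (x : PathIdx n → ℝ)
    (e f : Fin n) : ℝ :=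
  ∑ p ∈ Finset.univ.filter (fun p => IsLeafPath O S p ∧ Crosses p e ∧ Crosses p f), x p

/-- `x` is a path covering of the tree represented by `(O, S)`:
a nonnegative assignment of values to (leaf-originating) paths with
`∑_{p ∈ 𝒫_{e_r}} x_p ≥ 1` for the root edge `e_r`, and
`∑_{p ∈ 𝒫̃_e} x_p − ∑_{p ∈ 𝒫_e ∩ 𝒫_f} x_p ≥ 1` for every non-root edge `e`
with parent edge `f`. -/
def IsPathCovering {n m : ℕ} (O S : Fin n → Fin m) (x : PathIdx n → ℝ) : Prop :=
  (∀ p, 0 ≤ x p) ∧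
  (∀ e : Fin n, IsRootEdge O S e → 1 ≤ crossSum O S x e) ∧
  (∀ e f : Fin n, ¬ IsRootEdge O S e → O f = S e →
    1 ≤ endSum O S x e - crossBothSum O S x e f)

/-- The cost of a path covering: `c(x) = max_e ∑_{p ∈ 𝒫_e} x_p`. -/
noncomputable def coveringCost {n m : ℕ} (O S : Fin n → Fin m)
    (x : PathIdx n → ℝ) : ℝ :=
  ⨆ e : Fin n, crossSum O S x e

open Finset

section Paths

variable {n m : ℕ} {O S : Fin n → Fin m}

/-- The `a`-th edge of `p`, the index being read modulo the number of edges of `p`. -/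
def PathIdx.edge (p : PathIdx n) (a : ℕ) : Fin n := p.2 (Fin.ofNat _ a)

lemma PathIdx.edge_val (p : PathIdx n) (j : Fin (p.1 + 1)) : p.edge j = p.2 j := by
  simp [PathIdx.edge, Fin.ofNat, Nat.mod_eq_of_lt j.isLt]

lemma IsLeafPath.head_eq_tail {p : PathIdx n} (hp : IsLeafPath O S p) {a : ℕ}
    (ha : a < p.1) : S (p.edge a) = O (p.edge (a + 1)) := by
  simpa [← PathIdx.edge_val] using hp.1 ⟨a, ha⟩

lemma IsLeafPath.edge_ne (hnc : NoDirectedCycle O S) {p : PathIdx n}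
    (hp : IsLeafPath O S p) {a b : ℕ} (hab : a < b) (hb : b ≤ p.1) :
    p.edge a ≠ p.edge b := by
  intro heq
  obtain ⟨t, rfl⟩ : ∃ t, b = a + t + 1 := ⟨b - a - 1, by omega⟩
  refine hnc t (fun k => p.edge (a + k)) (Fin.lastCases ?_ fun k => ?_)
  · rw [Fin.last_add_one, Fin.val_last, Fin.val_zero, add_zero, heq]
    exact hp.head_eq_tail (by omega)
  · rw [Fin.coeSucc_eq_succ, Fin.val_succ, Fin.val_castSucc, ← add_assoc]
    exact hp.head_eq_tail (by omega)

lemma IsLeafPath.injective (hnc : NoDirectedCycle O S) {p : PathIdx n}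
    (hp : IsLeafPath O S p) : Function.Injective p.2 := by
  intro j j' h
  rw [← PathIdx.edge_val, ← PathIdx.edge_val] at h
  rcases lt_trichotomy (j : ℕ) j' with hlt | heq | hlt
  · exact absurd h (hp.edge_ne hnc hlt (by omega))
  · exact Fin.ext heq
  · exact absurd h.symm (hp.edge_ne hnc hlt (by omega))

lemma IsLeafPath.exists_next {p : PathIdx n} (hp : IsLeafPath O S p) {e : Fin n}
    (hcross : Crosses p e) (hend : ¬ EndsAt p e) : ∃ f, Crosses p f ∧ O f = S e := by
  obtain ⟨j, rfl⟩ := hcross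
  obtain ⟨k, rfl⟩ := Fin.exists_castSucc_eq.mpr fun h => hend (congrArg p.2 h.symm)
  exact ⟨p.2 k.succ, ⟨k.succ, rfl⟩, (hp.1 k).symm⟩

lemma IsLeafPath.sum_crosses {M : Type*} [AddCommMonoid M] (hnc : NoDirectedCycle O S)
    {p : PathIdx n} (hp : IsLeafPath O S p) (w : Fin n → M) :
    ∑ e with Crosses p e, w e = ∑ a ∈ range (p.1 + 1), w (p.edge a) := by
  have himage : univ.filter (Crosses p) = univ.image p.2 := by
    ext e
    simp [Crosses]
  rw [himage, sum_image fun _ _ _ _ h => hp.injective hnc h, ← Fin.sum_univ_eq_sum_range]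
  simp only [PathIdx.edge_val]

end Paths

section DoubleCounting

lemma sum_mul_sum_filter_comm {α β R : Type*} [Fintype α] [Fintype β] [CommSemiring R]
    (P : α → Prop) [DecidablePred P] (C : α → β → Prop) [∀ a b, Decidable (C a b)]
    (x : α → R) (w : β → R) :
    ∑ b, w b * ∑ a with P a ∧ C a b, x a = ∑ a with P a, x a * ∑ b with C a b, w b := by
  simp only [sum_filter, mul_sum, ite_and]
  rw [sum_comm]
  refine sum_congr rfl fun a _ => ?_
  split_ifs <;> simp [mul_comm]

variable {n m : ℕ} {O S : Fin n → Fin m} (x : PathIdx n → ℝ)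

lemma sum_mul_endSum (w : Fin n → ℝ) :
    ∑ e, w e * endSum O S x e = ∑ p with IsLeafPath O S p, x p * w (p.edge p.1) := by
  unfold endSum
  rw [sum_mul_sum_filter_comm]
  refine sum_congr rfl fun p _ => ?_
  simp [EndsAt, filter_eq, ← PathIdx.edge_val]

lemma sum_mul_crossSum (hnc : NoDirectedCycle O S) (w : Fin n → ℝ) :
    ∑ e, w e * crossSum O S x e
      = ∑ p with IsLeafPath O S p, x p * ∑ a ∈ range (p.1 + 1), w (p.edge a) := by
  unfold crossSum
  rw [sum_mul_sum_filter_comm]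
  exact sum_congr rfl fun p hp => by rw [(mem_filter.1 hp).2.sum_crosses hnc]

lemma sum_mul_two_mul_endSum_sub_crossSum (hnc : NoDirectedCycle O S) (w : Fin n → ℝ) :
    ∑ e, w e * (2 * endSum O S x e - crossSum O S x e)
      = ∑ p with IsLeafPath O S p,
          x p * (2 * w (p.edge p.1) - ∑ a ∈ range (p.1 + 1), w (p.edge a)) := by
  simp only [mul_sub, sum_sub_distrib, mul_left_comm _ (2 : ℝ), ← mul_sum,
    sum_mul_endSum, sum_mul_crossSum x hnc]

lemma sum_mul_crossSum_le {w : Fin n → ℝ} (hw : ∀ e, 0 ≤ w e) :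
    ∑ e, w e * crossSum O S x e ≤ coveringCost O S x * ∑ e, w e := by
  rw [mul_sum]
  refine sum_le_sum fun e _ => ?_
  rw [mul_comm]
  exact mul_le_mul_of_nonneg_right (le_ciSup (Set.finite_range _).bddAbove e) (hw e)

lemma crossSum_sub_endSum (e : Fin n) :
    crossSum O S x e - endSum O S x e
      = ∑ p with IsLeafPath O S p ∧ Crosses p e ∧ ¬ EndsAt p e, x p := by
  rw [sub_eq_iff_eq_add', crossSum, endSum, ← sum_filter_add_sum_filter_not
    (univ.filter fun p => IsLeafPath O S p ∧ Crosses p e) (EndsAt · e), filter_filter,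
    filter_filter]
  congr 1 <;> refine sum_congr (filter_congr fun p _ => ?_) fun _ _ => rfl
  · exact ⟨fun h => ⟨h.1.1, h.2⟩, fun h => ⟨⟨h.1, _, h.2⟩, h.2⟩⟩
  · tauto

end DoubleCounting

section Covering

variable {n m : ℕ} {O S : Fin n → Fin m} {x : PathIdx n → ℝ}

lemma IsDirectedGTree.outDeg_le_one {g : ℕ} (htree : IsDirectedGTree g O S) (v : Fin m) :
    outDeg O v ≤ 1 := by
  obtain ⟨-, r, -, hr, hother⟩ := htree
  by_cases hv : v = r
  · subst hv
    omega
  · exact (hother v hv).1.le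

lemma IsPathCovering.one_le_two_mul_endSum_sub_crossSum (hx : IsPathCovering O S x)
    (hout : ∀ v, outDeg O v ≤ 1) (e : Fin n) :
    1 ≤ 2 * endSum O S x e - crossSum O S x e := by
  have hthrough := crossSum_sub_endSum (O := O) (S := S) x e
  by_cases hroot : IsRootEdge O S e
  · have hnone : ∑ p with IsLeafPath O S p ∧ Crosses p e ∧ ¬ EndsAt p e, x p = 0 := by
      refine sum_eq_zero fun p hp => ?_
      obtain ⟨hp, hcross, hend⟩ := (mem_filter.1 hp).2
      obtain ⟨f, -, hf⟩ := hp.exists_next hcross hend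
      exact absurd hf (hroot f)
    linarith [hx.2.1 e hroot]
  · obtain ⟨f, hf⟩ : ∃ f, O f = S e := by simpa [IsRootEdge] using hroot
    have hparent : ∑ p with IsLeafPath O S p ∧ Crosses p e ∧ ¬ EndsAt p e, x p
        ≤ crossBothSum O S x e f := by
      refine sum_le_sum_of_subset_of_nonneg (fun p hp => ?_) fun p _ _ => hx.1 p
      simp only [mem_filter, mem_univ, true_and] at hp ⊢
      obtain ⟨hp, hcross, hend⟩ := hp
      obtain ⟨f', hf'cross, hf'⟩ := hp.exists_next hcross hend
      obtain rfl : f' = f := card_le_one.1 (hout (S e)) f' (by simp [hf']) f (by simp [hf])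
      exact ⟨hp, hcross, hf'cross⟩
    linarith [hx.2.2 e f hroot hf]

end Covering

section SerialDictatorship

variable {X : Type*} {n m : ℕ} {O S : Fin n → Fin m}

lemma IsSDWithOrder.dist_le_of_forall_ne [MetricSpace X] {I : FAInstance X n m}
    {σ : Equiv.Perm (Fin n)} (hSD : IsSDWithOrder I σ S) {j : Fin m} (hj : ∀ i, S i ≠ j)
    (hc : 0 < I.c j) (i : Fin n) : dist (I.A i) (I.F (S i)) ≤ dist (I.A i) (I.F j) := by
  have h := hSD.2 (σ.symm i) j (by rwa [filter_false_of_mem fun s _ h => hj _ h.2, card_empty])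
  rwa [σ.apply_symm_apply] at h

lemma IsLeafPath.dist_le_sum [PseudoMetricSpace X] (A : Fin n → X) (F : Fin m → X)
    {p : PathIdx n} (hp : IsLeafPath O S p) :
    dist (F (O (p.edge 0))) (F (O (p.edge p.1)))
      ≤ ∑ a ∈ range p.1, (dist (A (p.edge a)) (F (O (p.edge a)))
          + dist (A (p.edge a)) (F (S (p.edge a)))) := by
  refine (dist_le_range_sum_dist (fun a => F (O (p.edge a))) p.1).trans
    (sum_le_sum fun a ha => ?_)
  rw [← hp.head_eq_tail (mem_range.1 ha)]
  exact dist_triangle_left _ _ _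

lemma IsLeafPath.two_mul_dist_le [MetricSpace X] {I : FAInstance X n m}
    {σ : Equiv.Perm (Fin n)} (hSD : IsSDWithOrder I σ S) (hc : ∀ j, 0 < I.c j)
    {p : PathIdx n} (hp : IsLeafPath O S p) :
    2 * dist (I.A (p.edge p.1)) (I.F (S (p.edge p.1)))
      ≤ ∑ a ∈ range (p.1 + 1), (dist (I.A (p.edge a)) (I.F (O (p.edge a)))
          + dist (I.A (p.edge a)) (I.F (S (p.edge a)))) := by
  have hleaf : ∀ i, S i ≠ O (p.edge 0) := by
    simpa [← PathIdx.edge_val p 0] using hp.2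
  have hlast := hSD.dist_le_of_forall_ne hleaf (hc _) (p.edge p.1)
  have htri := dist_triangle (I.A (p.edge p.1)) (I.F (O (p.edge p.1))) (I.F (O (p.edge 0)))
  have hchain := hp.dist_le_sum I.A I.F
  rw [dist_comm (I.F (O (p.edge 0)))] at hchain
  rw [sum_range_succ]
  linarith

end SerialDictatorship

theorem sd_path_covering_bound_general {X : Type*} [MetricSpace X] {n m : ℕ}
    (g : ℕ) (hg : 2 ≤ g)
    (I : FAInstance X n m) (hunit : ∀ j, I.c j = 1)
    (O : Fin n → Fin m)
    (S : Fin n → Fin m) (hS : IsSDAssignment (I.augment g) S)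
    (htree : IsDirectedGTree g O S)
    (x : PathIdx n → ℝ) (hx : IsPathCovering O S x) :
    socialCost (I.augment g) S ≤ coveringCost O S x * socialCost I O := by
  obtain ⟨σ, hSD⟩ := hS
  have hc : ∀ j, 0 < (I.augment g).c j := fun j => by
    simp only [FAInstance.augment, hunit]
    omega
  set dO : Fin n → ℝ := fun e => dist (I.A e) (I.F (O e))
  set dS : Fin n → ℝ := fun e => dist (I.A e) (I.F (S e))
  calc socialCost (I.augment g) S = ∑ e, dS e := rfl
    _ ≤ ∑ e, dS e * (2 * endSum O S x e - crossSum O S x e) :=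
      sum_le_sum fun e _ => le_mul_of_one_le_right dist_nonneg
        (hx.one_le_two_mul_endSum_sub_crossSum htree.outDeg_le_one e)
    _ = ∑ p with IsLeafPath O S p,
          x p * (2 * dS (p.edge p.1) - ∑ a ∈ range (p.1 + 1), dS (p.edge a)) :=
      sum_mul_two_mul_endSum_sub_crossSum x htree.1 dS
    _ ≤ ∑ p with IsLeafPath O S p, x p * ∑ a ∈ range (p.1 + 1), dO (p.edge a) := by
      refine sum_le_sum fun p hp => mul_le_mul_of_nonneg_left ?_ (hx.1 p)
      have hpath : 2 * dS (p.edge p.1)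
          ≤ ∑ a ∈ range (p.1 + 1), (dO (p.edge a) + dS (p.edge a)) :=
        (mem_filter.1 hp).2.two_mul_dist_le hSD hc
      rw [sum_add_distrib] at hpath
      linarith
    _ = ∑ e, dO e * crossSum O S x e := (sum_mul_crossSum x htree.1 dO).symm
    _ ≤ coveringCost O S x * socialCost I O := sum_mul_crossSum_le x fun _ => dist_nonneg

/-- If `(I, O, S)` — with `O` an optimal assignment of the (unit-capacity) instance `I`
and `S` a Serial Dictatorship outcome on the `g`-augmented instance (`g ≥ 2`) — is
represented as a directed `g`-tree which has a path covering `x`, then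
`SC(S, I_g) ≤ c(x) · SC(O, I)`. -/
theorem sd_path_covering_bound {X : Type*} [MetricSpace X] {n m : ℕ}
    (g : ℕ) (hg : 2 ≤ g)
    (I : FAInstance X n m) (hunit : ∀ j, I.c j = 1)
    (O : Fin n → Fin m) (hOvalid : ValidAssignment I O)
    (hOopt : ∀ O' : Fin n → Fin m, ValidAssignment I O' →
      socialCost I O ≤ socialCost I O')
    (S : Fin n → Fin m) (hS : IsSDAssignment (I.augment g) S)
    (htree : IsDirectedGTree g O S)
    (x : PathIdx n → ℝ) (hx : IsPathCovering O S x) :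
    socialCost (I.augment g) S ≤ coveringCost O S x * socialCost I O :=
  sd_path_covering_bound_general g hg I hunit O S hS htree x hx
end

section
/- Let T be a directed 1-tree with at most n edges (equivalently, a directed path from a leaf to a root). Then there exists a path covering of T of cost at most 2^n − 1. -/
/-!
A directed 1-tree is a single directed path `e₀ → e₁ → ⋯ → e₍ₜ₋₁₎` from the leaf to the root, so
its leaf paths are exactly its `t` prefixes. Give the prefix ending at `eₖ` the weight
`2 ^ (t - 1 - k)`. The paths crossing both `eₖ` and its parent `eₖ₊₁` are the longer prefixes,
of total weight `2 ^ (t - 1 - k) - 1`, so every covering constraint holds with equality, and the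
load on `eₖ` is `2 ^ (t - k) - 1 ≤ 2 ^ t - 1`.

The path is found by numbering edges by their distance to the root edge along outgoing edges:
acyclicity makes this distance finite and less than `t`, and injectivity of heads makes it
injective, hence a bijection onto `Fin t`.
-/

open Finset Function

section Walks

variable {t m : ℕ} {O S : Fin t → Fin m}

/-- A closed stretch `w a, …, w b` of a walk is a directed cycle of length `b - a`. -/
lemma NoDirectedCycle.injOn_walk (hacyc : NoDirectedCycle O S) {w : ℕ → Fin t} {K : ℕ}
    (hw : ∀ k < K, S (w k) = O (w (k + 1))) : Set.InjOn w (Set.Iic K) := by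
  suffices key : ∀ a b, a < b → b ≤ K → w a ≠ w b by
    intro a ha b hb hab
    rcases lt_trichotomy a b with h | h | h
    · exact absurd hab (key a b h hb)
    · exact h
    · exact absurd hab.symm (key b a h ha)
  intro a b hab hbK hwab
  obtain ⟨c, rfl⟩ : ∃ c, b = a + c + 1 := ⟨b - a - 1, by omega⟩
  refine hacyc c (fun j => w (a + j)) fun j => ?_
  rw [Fin.val_add_one]
  split_ifs with hj
  · rw [hj, Fin.val_last, add_zero, hwab]
    exact hw _ (by omega)
  · exact hw _ (by omega)

lemma NoDirectedCycle.lt_of_walk (hacyc : NoDirectedCycle O S) {w : ℕ → Fin t} {K : ℕ}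
    (hw : ∀ k < K, S (w k) = O (w (k + 1))) : K < t := by
  have hinj : Set.InjOn w (Finset.Iic K : Set ℕ) := by
    rw [Finset.coe_Iic]; exact hacyc.injOn_walk hw
  have := Finset.card_le_card_of_injOn w (t := univ) (fun _ _ => mem_coe.2 (mem_univ _)) hinj
  simp only [Nat.card_Iic, card_univ, Fintype.card_fin] at this
  omega

lemma NoDirectedCycle.not_forall_walk (hacyc : NoDirectedCycle O S) (w : ℕ → Fin t) :
    ¬ ∀ k, S (w k) = O (w (k + 1)) :=
  fun hw => (hacyc.lt_of_walk (K := t) fun k _ => hw k).false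

end Walks

section Depth

variable {t m : ℕ} {O S : Fin t → Fin m} {er : Fin t}

noncomputable def nextEdge (O S : Fin t → Fin m) (e : Fin t) : Fin t :=
  if h : ∃ i, O i = S e then h.choose else e

lemma tail_nextEdge {e : Fin t} (h : ∃ i, O i = S e) : O (nextEdge O S e) = S e := by
  rw [nextEdge, dif_pos h]
  exact h.choose_spec

noncomputable def depth (O S : Fin t → Fin m) (er e : Fin t) : ℕ :=
  sInf {k | (nextEdge O S)^[k] e = er}

lemma depth_self : depth O S er er = 0 :=
  Nat.sInf_eq_zero.2 (Or.inl rfl)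

variable (hacyc : NoDirectedCycle O S) (hnext : ∀ e ≠ er, ∃ i, O i = S e)
include hacyc hnext

lemma exists_iterate_nextEdge_eq (e : Fin t) : ∃ k, (nextEdge O S)^[k] e = er := by
  by_contra! hne
  refine hacyc.not_forall_walk (fun k => (nextEdge O S)^[k] e) fun k => ?_
  rw [iterate_succ_apply', tail_nextEdge (hnext _ (hne k))]

lemma iterate_nextEdge_depth (e : Fin t) : (nextEdge O S)^[depth O S er e] e = er :=
  Nat.sInf_mem (exists_iterate_nextEdge_eq hacyc hnext e)

lemma depth_lt (e : Fin t) : depth O S er e < t := by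
  refine hacyc.lt_of_walk (w := fun k => (nextEdge O S)^[k] e) fun k hk => ?_
  rw [iterate_succ_apply', tail_nextEdge (hnext _ (Nat.notMem_of_lt_sInf hk))]

lemma eq_of_depth_eq_zero {e : Fin t} (h : depth O S er e = 0) : e = er := by
  simpa [h] using iterate_nextEdge_depth hacyc hnext e

lemma depth_nextEdge {e : Fin t} (he : e ≠ er) :
    depth O S er (nextEdge O S e) + 1 = depth O S er e := by
  apply le_antisymm
  · obtain ⟨k, hk⟩ := Nat.exists_eq_succ_of_ne_zero
      (mt (eq_of_depth_eq_zero hacyc hnext) he)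
    have := iterate_nextEdge_depth hacyc hnext e
    rw [hk, iterate_succ_apply] at this
    rw [hk]
    exact Nat.succ_le_succ (Nat.sInf_le this)
  · apply Nat.sInf_le
    rw [Set.mem_ofPred_eq, iterate_succ_apply]
    exact iterate_nextEdge_depth hacyc hnext _

lemma depth_injective (hS : Injective S) : Injective (depth O S er) := by
  suffices key : ∀ k e e', depth O S er e = k → depth O S er e' = k → e = e' from
    fun e e' h => key _ e e' rfl h.symm
  intro k
  induction k with
  | zero =>
    intro e e' he he'
    rw [eq_of_depth_eq_zero hacyc hnext he, eq_of_depth_eq_zero hacyc hnext he']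
  | succ k ih =>
    intro e e' he he'
    have hne : ∀ {e}, depth O S er e = k + 1 → e ≠ er := by
      rintro e he rfl; simp [depth_self] at he
    have hnext_eq := ih (nextEdge O S e) (nextEdge O S e')
      (by have := depth_nextEdge hacyc hnext (hne he); omega)
      (by have := depth_nextEdge hacyc hnext (hne he'); omega)
    apply hS
    rw [← tail_nextEdge (hnext _ (hne he)), ← tail_nextEdge (hnext _ (hne he')), hnext_eq]

end Depth

section OneTree

variable {t m : ℕ} {O S : Fin t → Fin m}

lemma IsDirectedGTree.injective_head (htree : IsDirectedGTree 1 O S) : Injective S := by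
  obtain ⟨-, r, hr, -, hv⟩ := htree
  have hle : ∀ v, inDeg S v ≤ 1 := fun v => by
    by_cases hvr : v = r
    · exact hvr ▸ hr.le
    · rcases (hv v hvr).2 with h | h <;> omega
  intro i j hij
  exact Finset.card_le_one.1 (hle (S i)) i (by simp) j (by simp [hij])

lemma IsDirectedGTree.injective_tail (htree : IsDirectedGTree 1 O S) : Injective O := by
  obtain ⟨-, r, -, hr, hv⟩ := htree
  have hle : ∀ v, outDeg O v ≤ 1 := fun v => by
    by_cases hvr : v = r
    · exact hvr ▸ hr.le.trans zero_le_one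
    · exact (hv v hvr).1.le
  intro i j hij
  exact Finset.card_le_one.1 (hle (O i)) i (by simp) j (by simp [hij])

lemma IsDirectedGTree.exists_isRootEdge (htree : IsDirectedGTree 1 O S) :
    ∃ er, IsRootEdge O S er ∧ ∀ e ≠ er, ∃ i, O i = S e := by
  obtain ⟨-, r, hr1, hr0, hv⟩ := htree
  obtain ⟨er, her⟩ := Finset.card_eq_one.1 hr1
  have hS : ∀ e, S e = r ↔ e = er := fun e => by
    simpa using Finset.ext_iff.1 her e
  refine ⟨er, fun i hi => ?_, fun e he => ?_⟩
  · have : i ∈ univ.filter (fun i => O i = r) := by simp [hi, (hS er).2 rfl]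
    simp [Finset.card_eq_zero.1 hr0] at this
  · obtain ⟨i, hi⟩ := Finset.card_eq_one.1 (hv (S e) (mt (hS e).1 he)).1
    exact ⟨i, by simpa using Finset.ext_iff.1 hi i⟩

structure IsHeightFunction (O S : Fin t → Fin m) (h : Fin t ≃ Fin t) : Prop where
  chain : ∀ e f, (h f : ℕ) = h e + 1 → S e = O f
  leaf : ∀ e, (h e : ℕ) = 0 → ∀ i, S i ≠ O e
  root : ∀ e, (h e : ℕ) + 1 = t → IsRootEdge O S e

lemma IsDirectedGTree.exists_isHeightFunction (htree : IsDirectedGTree 1 O S) :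
    ∃ h, IsHeightFunction O S h := by
  obtain ⟨er, hroot, hnext⟩ := htree.exists_isRootEdge
  have hacyc := htree.1
  have hlt := depth_lt hacyc hnext
  have hinj := depth_injective hacyc hnext htree.injective_head
  let hgt : Fin t → Fin t := fun e => ⟨t - 1 - depth O S er e, by have := e.isLt; omega⟩
  have hgt_inj : Injective hgt := fun e e' hee' => hinj <| by
    have := Fin.val_eq_of_eq hee'
    have := hlt e; have := hlt e'
    simp only [hgt] at *
    omega
  refine ⟨Equiv.ofBijective hgt (Finite.injective_iff_bijective.1 hgt_inj), ⟨?_, ?_, ?_⟩⟩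
  · intro e f hef
    simp only [Equiv.ofBijective_apply, hgt] at hef
    have := hlt e; have := hlt f
    have hne : e ≠ er := by rintro rfl; rw [depth_self] at hef; omega
    have hdf : depth O S er (nextEdge O S e) = depth O S er f := by
      have := depth_nextEdge hacyc hnext hne; omega
    rw [← tail_nextEdge (hnext e hne), hinj hdf]
  · intro e he i hi
    simp only [Equiv.ofBijective_apply, hgt] at he
    have hne : i ≠ er := by rintro rfl; exact hroot e hi.symm
    have hie : nextEdge O S i = e :=
      htree.injective_tail ((tail_nextEdge (hnext i hne)).trans hi)
    have := hlt e; have := hlt i; have := depth_nextEdge hacyc hnext hne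
    rw [hie] at this
    omega
  · intro e he
    simp only [Equiv.ofBijective_apply, hgt] at he
    have := hlt e
    rw [eq_of_depth_eq_zero hacyc hnext (e := e) (by omega)]
    exact hroot

end OneTree

section LeafPaths

variable {t m : ℕ} {O S : Fin t → Fin m} {h : Fin t ≃ Fin t}

def leafPath (h : Fin t ≃ Fin t) (a : Fin t) : PathIdx t :=
  ⟨a, fun j => h.symm (Fin.castLE a.isLt j)⟩

lemma crosses_leafPath_iff (a e : Fin t) : Crosses (leafPath h a) e ↔ (h e : ℕ) ≤ a := by
  simp only [Crosses, leafPath, Equiv.symm_apply_eq]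
  constructor
  · rintro ⟨j, hj⟩
    rw [← hj, Fin.val_castLE]
    exact Nat.lt_succ_iff.1 j.isLt
  · intro hle
    exact ⟨⟨h e, Nat.lt_succ_of_le hle⟩, Fin.ext rfl⟩

lemma endsAt_leafPath_iff (a e : Fin t) : EndsAt (leafPath h a) e ↔ h e = a := by
  simp only [EndsAt, leafPath, Equiv.symm_apply_eq, Fin.ext_iff, Fin.val_castLE, Fin.val_last]
  exact eq_comm

lemma IsHeightFunction.isLeafPath_iff (hh : IsHeightFunction O S h) (hO : Injective O)
    (p : PathIdx t) : IsLeafPath O S p ↔ p = leafPath h p.1 := by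
  obtain ⟨a, g⟩ := p
  constructor
  · rintro ⟨hchain, hleaf⟩
    have hg : ∀ j, (h (g j) : ℕ) = j := by
      intro j
      induction j using Fin.induction with
      | zero =>
        by_contra hne
        obtain ⟨k, hk⟩ := Nat.exists_eq_succ_of_ne_zero hne
        exact hleaf (h.symm ⟨k, by omega⟩) (hh.chain _ _ (by simpa using hk))
      | succ j ih =>
        have hj : (j : ℕ) + 1 < t := by have := a.isLt; omega
        have hf := hh.chain (g j.castSucc) (h.symm ⟨j + 1, hj⟩) (by simp [ih])
        have hgj : g j.succ = h.symm ⟨j + 1, hj⟩ := hO ((hchain j).symm.trans hf)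
        simp [hgj]
    show (⟨a, g⟩ : PathIdx t) = ⟨a, _⟩
    congr 1
    funext j
    rw [Equiv.eq_symm_apply]
    exact Fin.ext (by simp [hg])
  · intro hp
    rw [hp]
    refine ⟨fun j => hh.chain _ _ ?_, fun i => hh.leaf _ ?_ i⟩ <;> simp [leafPath] <;> rfl

lemma IsHeightFunction.sum_isLeafPath (hh : IsHeightFunction O S h) (hO : Injective O)
    (x : PathIdx t → ℝ) (Q : PathIdx t → Prop) [DecidablePred Q] :
    ∑ p with IsLeafPath O S p ∧ Q p, x p = ∑ a with Q (leafPath h a), x (leafPath h a) := by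
  symm
  refine Finset.sum_nbij' (leafPath h) (fun p => p.1) (fun a ha => ?_) (fun p hp => ?_)
    (fun a _ => rfl) (fun p hp => ?_) (fun _ _ => rfl)
  · simp only [mem_filter, mem_univ, true_and] at ha ⊢
    exact ⟨(hh.isLeafPath_iff hO _).2 rfl, ha⟩
  · simp only [mem_filter, mem_univ, true_and] at hp ⊢
    rw [← (hh.isLeafPath_iff hO p).1 hp.1]
    exact hp.2
  · simp only [mem_filter, mem_univ, true_and] at hp
    exact ((hh.isLeafPath_iff hO p).1 hp.1).symm

end LeafPaths

lemma sum_two_pow_filter_le (t ρ : ℕ) :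
    ∑ a ∈ univ.filter (fun a : Fin t => ρ ≤ a), (2 : ℝ) ^ (t - 1 - a) = 2 ^ (t - ρ) - 1 := by
  rw [sum_filter,
    Fin.sum_univ_eq_sum_range (fun a => if ρ ≤ a then (2 : ℝ) ^ (t - 1 - a) else 0),
    ← sum_range_reflect]
  have hrange : (range t).filter (· < t - ρ) = range (t - ρ) := by
    ext k; simp only [mem_filter, mem_range]; omega
  calc ∑ k ∈ range t, (if ρ ≤ t - 1 - k then (2 : ℝ) ^ (t - 1 - (t - 1 - k)) else 0)
      = ∑ k ∈ range t, if k < t - ρ then (2 : ℝ) ^ k else 0 := by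
        refine sum_congr rfl fun k hk => ?_
        rw [mem_range] at hk
        exact if_congr (by omega) (by congr 1; omega) rfl
    _ = 2 ^ (t - ρ) - 1 := by
        rw [← sum_filter, hrange, geom_sum_eq (by norm_num)]
        norm_num

/-- Only leaf paths enter the constraints and the cost, so the value elsewhere is immaterial. -/
noncomputable def geomCovering (t : ℕ) (p : PathIdx t) : ℝ :=
  2 ^ (t - 1 - (p.1 : ℕ))

namespace IsHeightFunction

variable {t m : ℕ} {O S : Fin t → Fin m} {h : Fin t ≃ Fin t}
  (hh : IsHeightFunction O S h) (hO : Injective O)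
include hh hO

lemma crossSum_geomCovering (e : Fin t) :
    crossSum O S (geomCovering t) e = 2 ^ (t - h e) - 1 := by
  rw [crossSum, hh.sum_isLeafPath hO]
  simp only [crosses_leafPath_iff]
  exact sum_two_pow_filter_le t (h e)

lemma endSum_geomCovering (e : Fin t) :
    endSum O S (geomCovering t) e = 2 ^ (t - 1 - h e) := by
  rw [endSum, hh.sum_isLeafPath hO]
  simp only [endsAt_leafPath_iff, filter_eq, mem_univ, if_true, sum_singleton]
  rfl

lemma crossBothSum_geomCovering {e f : Fin t} (hef : (h f : ℕ) = h e + 1) :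
    crossBothSum O S (geomCovering t) e f = 2 ^ (t - 1 - h e) - 1 := by
  rw [crossBothSum, hh.sum_isLeafPath hO]
  simp only [crosses_leafPath_iff, hef]
  rw [Nat.sub_right_comm, ← Nat.sub_add_eq, ← sum_two_pow_filter_le t (h e + 1)]
  exact sum_congr (filter_congr fun a _ => by omega) fun _ _ => rfl

lemma height_parent {e f : Fin t} (he : ¬ IsRootEdge O S e) (hf : O f = S e) :
    (h f : ℕ) = h e + 1 := by
  have hlt : (h e : ℕ) + 1 < t := by
    have := (h e).isLt
    by_contra hge
    exact he (hh.root e (by omega))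
  have := hh.chain e (h.symm ⟨h e + 1, hlt⟩) (by simp)
  rw [hO (hf.trans this)]
  simp

lemma isPathCovering_geomCovering : IsPathCovering O S (geomCovering t) := by
  refine ⟨fun _ => pow_nonneg zero_le_two _, fun e _ => ?_, fun e f he hf => ?_⟩
  · rw [hh.crossSum_geomCovering hO]
    have : (2 : ℝ) ≤ 2 ^ (t - h e) := le_self_pow₀ one_le_two (by have := (h e).isLt; omega)
    linarith
  · rw [hh.endSum_geomCovering hO, hh.crossBothSum_geomCovering hO (hh.height_parent hO he hf),
      sub_sub_cancel]

lemma coveringCost_geomCovering_le : coveringCost O S (geomCovering t) ≤ 2 ^ t - 1 := by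
  refine Real.iSup_le (fun e => ?_) (by simpa using one_le_pow₀ one_le_two)
  rw [hh.crossSum_geomCovering hO]
  gcongr
  · norm_num
  · omega

end IsHeightFunction

/-- Every directed 1-tree with at most `n` edges has a path covering of cost at most
`2 ^ n − 1`. -/
theorem one_tree_path_covering (n : ℕ) {t m : ℕ} (ht : t ≤ n)
    (O S : Fin t → Fin m) (htree : IsDirectedGTree 1 O S) :
    ∃ x : PathIdx t → ℝ, IsPathCovering O S x ∧ coveringCost O S x ≤ 2 ^ n - 1 := by
  obtain ⟨h, hh⟩ := htree.exists_isHeightFunction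
  have hO := htree.injective_tail
  refine ⟨geomCovering t, hh.isPathCovering_geomCovering hO, ?_⟩
  calc coveringCost O S (geomCovering t) ≤ 2 ^ t - 1 := hh.coveringCost_geomCovering_le hO
    _ ≤ 2 ^ n - 1 := by gcongr; norm_num
end

section
/- Let g ≥ 3 be an integer and let T be a directed g-tree. Then there exists a path covering of T of cost g/(g−2). -/
/-!
Give the leaf path from the leaf edge `a` up to the edge `b` the value
`g ^ -(depth a - depth b) * c b`, where `c = g / (g - 2)` on the root edge and
`c = (g - 1) / (g - 2)` elsewhere. This value splits as `g ^ -depth a` times `c b * g ^ depth b`,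
so every sum over paths in the covering conditions at an edge `e` factors into a sum over the
leaves below `e` and a sum over a segment of the path from `e` to the root. The first factor is
`g ^ -depth e`, because every internal node has `g` children (Kraft's equality); the second is
`g ^ depth e * g / (g - 2)`, by induction along the root path, since
`(g - 1) / (g - 2) + 1 / (g - 2) = g / (g - 2)`. Hence every edge is crossed with weight exactly
`g / (g - 2)`, and at a non-root edge the paths ending there outweigh the paths continuing to its
parent by `(g - 1) / (g - 2) - 1 / (g - 2) = 1`.
-/

namespace RepGraph

open Finset Function

variable {n m : ℕ} {O S : Fin n → Fin m}

def IsLeafEdge (O S : Fin n → Fin m) (e : Fin n) : Prop := ∀ i, S i ≠ O e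

/-- The root edge, which has no edge leaving its head, is its own parent. -/
noncomputable def parent (O S : Fin n → Fin m) (e : Fin n) : Fin n :=
  if h : ∃ f, O f = S e then h.choose else e

noncomputable def depth (O S : Fin n → Fin m) (e : Fin n) : ℕ :=
  sInf {k | IsRootEdge O S ((parent O S)^[k] e)}

def Below (O S : Fin n → Fin m) (a e : Fin n) : Prop := ∃ k, (parent O S)^[k] a = e

structure IsInForest (O S : Fin n → Fin m) : Prop where
  noDirectedCycle : NoDirectedCycle O S
  outDeg_le_one : ∀ v, outDeg O v ≤ 1

lemma parent_of_isRootEdge {e : Fin n} (h : IsRootEdge O S e) : parent O S e = e :=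
  dif_neg fun ⟨f, hf⟩ => h f hf

lemma out_parent {e : Fin n} (h : ¬IsRootEdge O S e) : O (parent O S e) = S e := by
  have hex : ∃ f, O f = S e := by simpa [IsRootEdge] using h
  rw [parent, dif_pos hex]
  exact hex.choose_spec

lemma not_isRootEdge_iterate_of_lt_depth {e : Fin n} {k : ℕ} (h : k < depth O S e) :
    ¬IsRootEdge O S ((parent O S)^[k] e) :=
  Nat.notMem_of_lt_sInf h

lemma isLeafEdge_iff_inDeg_eq_zero {e : Fin n} : IsLeafEdge O S e ↔ inDeg S (O e) = 0 := by
  simp [IsLeafEdge, inDeg, filter_eq_empty_iff]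

lemma Below.refl {e : Fin n} : Below O S e e := ⟨0, rfl⟩

lemma Below.trans {a b c : Fin n} (hab : Below O S a b) (hbc : Below O S b c) :
    Below O S a c := by
  obtain ⟨k, rfl⟩ := hab
  obtain ⟨l, rfl⟩ := hbc
  exact ⟨l + k, iterate_add_apply _ _ _ _⟩

lemma below_parent (e : Fin n) : Below O S e (parent O S e) := ⟨1, rfl⟩

lemma below_iff_eq_or_parent_below {e b : Fin n} :
    Below O S e b ↔ b = e ∨ Below O S (parent O S e) b := by
  refine ⟨fun ⟨k, hk⟩ => ?_, ?_⟩
  · cases k with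
    | zero => exact Or.inl hk.symm
    | succ k => exact Or.inr ⟨k, by rwa [iterate_succ_apply] at hk⟩
  · rintro (rfl | h)
    exacts [.refl, (below_parent e).trans h]

def firstEdge (p : PathIdx n) : Fin n := p.2 0

def lastEdge (p : PathIdx n) : Fin n := p.2 (Fin.last _)

lemma endsAt_iff {p : PathIdx n} {e : Fin n} : EndsAt p e ↔ lastEdge p = e := Iff.rfl

noncomputable def chainPath (O S : Fin n → Fin m) (a t : Fin n) : PathIdx n :=
  ⟨t, fun j => (parent O S)^[j] a⟩

lemma lastEdge_chainPath (a t : Fin n) :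
    lastEdge (chainPath O S a t) = (parent O S)^[t] a := rfl

lemma isLeafPath_chainPath {a t : Fin n} (ha : IsLeafEdge O S a)
    (ht : (t : ℕ) ≤ depth O S a) : IsLeafPath O S (chainPath O S a t) := by
  refine ⟨fun j => ?_, ha⟩
  change S ((parent O S)^[j] a) = O ((parent O S)^[j + 1] a)
  have hj : (j : ℕ) < t := j.is_lt
  rw [iterate_succ_apply']
  exact (out_parent (not_isRootEdge_iterate_of_lt_depth (e := a) (by omega))).symm

open scoped Classical in
noncomputable def leavesBelow (O S : Fin n → Fin m) (e : Fin n) : Finset (Fin n) :=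
  univ.filter fun a => IsLeafEdge O S a ∧ Below O S a e

open scoped Classical in
noncomputable def rootPath (O S : Fin n → Fin m) (e : Fin n) : Finset (Fin n) :=
  univ.filter fun b => Below O S e b

@[simp]
lemma mem_leavesBelow {a e : Fin n} :
    a ∈ leavesBelow O S e ↔ IsLeafEdge O S a ∧ Below O S a e := by
  simp [leavesBelow]

@[simp]
lemma mem_rootPath {e b : Fin n} : b ∈ rootPath O S e ↔ Below O S e b := by
  simp [rootPath]

lemma rootPath_of_isRootEdge {e : Fin n} (he : IsRootEdge O S e) : rootPath O S e = {e} := by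
  ext b
  rw [mem_rootPath, mem_singleton]
  refine ⟨fun ⟨k, hk⟩ => ?_, fun hb => hb ▸ .refl⟩
  have hfix : IsFixedPt (parent O S) e := parent_of_isRootEdge he
  rw [← hk, (hfix.iterate k).eq]

lemma rootPath_eq_insert (e : Fin n) :
    rootPath O S e = insert e (rootPath O S (parent O S e)) := by
  ext b
  rw [mem_insert, mem_rootPath, mem_rootPath, below_iff_eq_or_parent_below]

open scoped Classical in
noncomputable def endWeight (g : ℕ) (O S : Fin n → Fin m) (e : Fin n) : ℝ :=
  (if IsRootEdge O S e then (g : ℝ) else g - 1) / (g - 2) * g ^ depth O S e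

noncomputable def covering (g : ℕ) (O S : Fin n → Fin m) (p : PathIdx n) : ℝ :=
  ((g : ℝ) ^ depth O S (firstEdge p))⁻¹ * endWeight g O S (lastEdge p)

lemma covering_nonneg {g : ℕ} (hg : 2 < g) (p : PathIdx n) : 0 ≤ covering g O S p := by
  have hg' : (2 : ℝ) < g := by exact_mod_cast hg
  refine mul_nonneg (by positivity) (mul_nonneg (div_nonneg ?_ (by linarith)) (by positivity))
  split_ifs <;> linarith

namespace IsInForest

variable (hF : IsInForest O S)
include hF

lemma parent_eq {e f : Fin n} (h : O f = S e) : parent O S e = f := by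
  have hroot : ¬IsRootEdge O S e := fun hr => hr f h
  exact card_le_one.mp (hF.outDeg_le_one (S e)) _ (by simp [out_parent hroot]) _ (by simp [h])

lemma isRootEdge_of_isPeriodicPt {e : Fin n} {k : ℕ}
    (hk : IsPeriodicPt (parent O S) (k + 1) e) : IsRootEdge O S e := by
  obtain ⟨l, hl, hroot⟩ : ∃ l ≤ k, IsRootEdge O S ((parent O S)^[l] e) := by
    by_contra! hnot
    refine hF.noDirectedCycle k (fun j => (parent O S)^[j] e) fun j => ?_
    have hj : (((j + 1 : Fin (k + 1)) : ℕ)) = ((j : ℕ) + 1) % (k + 1) := by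
      rw [Fin.val_add, Fin.val_one', Nat.add_mod_mod]
    rw [hj, hk.iterate_mod_apply, iterate_succ_apply', out_parent (hnot j (by omega))]
  have hfix : IsFixedPt (parent O S) ((parent O S)^[l] e) := parent_of_isRootEdge hroot
  have : (parent O S)^[k + 1] e = (parent O S)^[l] e := by
    rw [show k + 1 = (k + 1 - l) + l by omega, iterate_add_apply]
    exact hfix.iterate _
  rwa [← hk.eq.symm.trans this] at hroot

lemma exists_isRootEdge_iterate (e : Fin n) :
    ∃ k < n, IsRootEdge O S ((parent O S)^[k] e) := by
  obtain ⟨i, j, hij, heq⟩ := Fintype.exists_ne_map_eq_of_card_lt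
    (fun i : Fin (n + 1) => (parent O S)^[i] e) (by simp)
  wlog hlt : i < j generalizing i j
  · exact this j i hij.symm heq.symm (lt_of_le_of_ne (not_lt.mp hlt) hij.symm)
  refine ⟨i, by omega, hF.isRootEdge_of_isPeriodicPt (k := j - i - 1) ?_⟩
  rw [IsPeriodicPt, IsFixedPt, ← iterate_add_apply, show (j : ℕ) - i - 1 + 1 + i = j by omega]
  exact heq.symm

lemma isRootEdge_iterate_depth (e : Fin n) :
    IsRootEdge O S ((parent O S)^[depth O S e] e) :=
  Nat.sInf_mem ((hF.exists_isRootEdge_iterate e).imp fun _ h => h.2)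

lemma depth_lt (e : Fin n) : depth O S e < n := by
  obtain ⟨k, hk, hroot⟩ := hF.exists_isRootEdge_iterate e
  exact (Nat.sInf_le hroot).trans_lt hk

lemma depth_eq_zero_iff {e : Fin n} : depth O S e = 0 ↔ IsRootEdge O S e := by
  refine ⟨fun h => ?_, fun h => Nat.sInf_eq_zero.mpr (Or.inl h)⟩
  simpa [h] using hF.isRootEdge_iterate_depth e

lemma depth_parent (e : Fin n) : depth O S (parent O S e) = depth O S e - 1 := by
  by_cases hroot : IsRootEdge O S e
  · rw [parent_of_isRootEdge hroot, hF.depth_eq_zero_iff.mpr hroot]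
  have hpos : 1 ≤ depth O S e :=
    Nat.one_le_iff_ne_zero.mpr (hF.depth_eq_zero_iff.not.mpr hroot)
  have := Nat.sInf_add (p := fun k => IsRootEdge O S ((parent O S)^[k] e)) hpos
  simp only [iterate_add_apply, iterate_one] at this
  unfold depth
  omega

lemma depth_iterate (k : ℕ) (e : Fin n) :
    depth O S ((parent O S)^[k] e) = depth O S e - k := by
  induction k with
  | zero => rfl
  | succ k ih => rw [iterate_succ_apply', hF.depth_parent, ih, Nat.sub_sub]

lemma depth_eq_succ_of_out_eq {c e : Fin n} (h : O e = S c) :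
    depth O S c = depth O S e + 1 := by
  have hc : depth O S c ≠ 0 := hF.depth_eq_zero_iff.not.mpr fun hr => hr e h
  have := hF.depth_parent c
  rw [hF.parent_eq h] at this
  omega

lemma iterate_depth_sub_of_below {a e : Fin n} (h : Below O S a e) :
    (parent O S)^[depth O S a - depth O S e] a = e := by
  obtain ⟨k, rfl⟩ := h
  rw [hF.depth_iterate]
  rcases le_or_gt k (depth O S a) with hk | hk
  · rw [Nat.sub_sub_self hk]
  · have hfix : IsFixedPt (parent O S) ((parent O S)^[depth O S a] a) :=
      parent_of_isRootEdge (hF.isRootEdge_iterate_depth a)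
    rw [show k = (k - depth O S a) + depth O S a by omega, iterate_add_apply,
      (hfix.iterate _).eq]
    simp

lemma depth_le_of_below {a e : Fin n} (h : Below O S a e) : depth O S e ≤ depth O S a := by
  obtain ⟨k, rfl⟩ := h
  rw [hF.depth_iterate]
  omega

lemma eq_of_below_of_depth_eq {a c c' : Fin n} (hc : Below O S a c) (hc' : Below O S a c')
    (hd : depth O S c = depth O S c') : c = c' := by
  rw [← hF.iterate_depth_sub_of_below hc, ← hF.iterate_depth_sub_of_below hc', hd]

lemma not_parent_below {e : Fin n} (h : ¬IsRootEdge O S e) :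
    ¬Below O S (parent O S e) e := by
  intro hb
  have := hF.depth_le_of_below hb
  rw [hF.depth_parent] at this
  have := hF.depth_eq_zero_iff.not.mpr h
  omega

lemma below_iff_eq_or_below_child {a e : Fin n} :
    Below O S a e ↔ a = e ∨ ∃ c, S c = O e ∧ Below O S a c := by
  refine ⟨fun h => ?_, ?_⟩
  · have he := hF.iterate_depth_sub_of_below h
    obtain hk | hk := Nat.eq_zero_or_pos (depth O S a - depth O S e)
    · rw [hk] at he
      exact Or.inl he
    set c := (parent O S)^[depth O S a - depth O S e - 1] a
    have hce : parent O S c = e := by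
      rw [← he, ← iterate_succ_apply' (parent O S), Nat.succ_eq_add_one,
        Nat.sub_one_add_one hk.ne']
    have hc : ¬IsRootEdge O S c := by
      rw [← hF.depth_eq_zero_iff, hF.depth_iterate]
      have := hF.depth_le_of_below h
      omega
    exact Or.inr ⟨c, by rw [← out_parent hc, hce], _, rfl⟩
  · rintro (rfl | ⟨c, hc, hac⟩)
    · exact .refl
    · exact hac.trans ⟨1, hF.parent_eq hc.symm⟩

section LeafPath

variable {p : PathIdx n} (hp : IsLeafPath O S p)
include hp

lemma eq_iterate_of_isLeafPath (j : Fin (p.1 + 1)) :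
    p.2 j = (parent O S)^[j] (firstEdge p) := by
  induction j using Fin.induction with
  | zero => rfl
  | succ j ih =>
    rw [← hF.parent_eq (hp.1 j).symm, ih, Fin.val_succ, Fin.val_castSucc, iterate_succ_apply']

lemma lastEdge_eq_of_isLeafPath : lastEdge p = (parent O S)^[p.1] (firstEdge p) :=
  hF.eq_iterate_of_isLeafPath hp _

lemma below_lastEdge : Below O S (firstEdge p) (lastEdge p) :=
  ⟨p.1, (hF.lastEdge_eq_of_isLeafPath hp).symm⟩

lemma eq_chainPath : p = chainPath O S (firstEdge p) p.1 :=
  Sigma.ext rfl (heq_of_eq (funext (hF.eq_iterate_of_isLeafPath hp)))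

lemma le_depth_of_isLeafPath : (p.1 : ℕ) ≤ depth O S (firstEdge p) := by
  by_contra! hlt
  have hroot := hF.isRootEdge_iterate_depth (firstEdge p)
  have hstep := hp.1 ⟨_, hlt⟩
  rw [hF.eq_iterate_of_isLeafPath hp] at hstep
  exact hroot _ hstep.symm

lemma crosses_iff {e : Fin n} :
    Crosses p e ↔ Below O S (firstEdge p) e ∧ Below O S e (lastEdge p) := by
  have hlast := hF.lastEdge_eq_of_isLeafPath hp
  refine ⟨fun ⟨j, hj⟩ => ⟨⟨j, by rw [← hj, hF.eq_iterate_of_isLeafPath hp]⟩, ⟨p.1 - j, ?_⟩⟩,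
    fun ⟨hfe, hel⟩ => ⟨⟨depth O S (firstEdge p) - depth O S e, ?_⟩, ?_⟩⟩
  · rw [← hj, hF.eq_iterate_of_isLeafPath hp, hlast, ← iterate_add_apply,
      Nat.sub_add_cancel (Nat.lt_succ_iff.mp j.is_lt)]
  · have := hF.depth_le_of_below hel
    rw [hlast, hF.depth_iterate] at this
    have := hF.le_depth_of_isLeafPath hp
    omega
  · rw [hF.eq_iterate_of_isLeafPath hp]
    exact hF.iterate_depth_sub_of_below hfe

end LeafPath

/-- A leaf path is determined by its first and last edges, so a sum over leaf paths of a weight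
that splits between the two ends factors. -/
lemma sum_leafPaths_mul (w v : Fin n → ℝ) {e : Fin n} {B : Finset (Fin n)}
    (hB : ∀ b ∈ B, Below O S e b) (Q : PathIdx n → Prop) [DecidablePred Q]
    (hQ : ∀ p, IsLeafPath O S p → (Q p ↔ Below O S (firstEdge p) e ∧ lastEdge p ∈ B)) :
    ∑ p ∈ univ.filter (fun p => IsLeafPath O S p ∧ Q p), w (firstEdge p) * v (lastEdge p) =
      (∑ a ∈ leavesBelow O S e, w a) * ∑ b ∈ B, v b := by
  rw [sum_mul_sum, ← sum_product']
  refine sum_nbij' (fun p => (firstEdge p, lastEdge p))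
    (fun z => chainPath O S z.1
      ⟨depth O S z.1 - depth O S z.2, (Nat.sub_le _ _).trans_lt (hF.depth_lt z.1)⟩)
    ?_ ?_ ?_ ?_ fun _ _ => rfl
  · intro p hp
    rw [mem_filter] at hp
    have := (hQ p hp.2.1).mp hp.2.2
    simp only [mem_product, mem_leavesBelow]
    exact ⟨⟨hp.2.1.2, this.1⟩, this.2⟩
  · rintro ⟨a, b⟩ hab
    simp only [mem_product, mem_leavesBelow] at hab
    obtain ⟨⟨ha, hae⟩, hb⟩ := hab
    have hpath := isLeafPath_chainPath (O := O) (S := S) ha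
      (t := ⟨depth O S a - depth O S b, (Nat.sub_le _ _).trans_lt (hF.depth_lt a)⟩)
      (Nat.sub_le _ _)
    refine mem_filter.mpr ⟨mem_univ _, hpath, (hQ _ hpath).mpr ⟨hae, ?_⟩⟩
    rwa [lastEdge_chainPath, hF.iterate_depth_sub_of_below (hae.trans (hB b hb))]
  · intro p hp
    have hp := (mem_filter.mp hp).2.1
    conv_rhs => rw [hF.eq_chainPath hp]
    have := hF.le_depth_of_isLeafPath hp
    congr 1
    ext
    simp only [hF.lastEdge_eq_of_isLeafPath hp, hF.depth_iterate]
    omega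
  · rintro ⟨a, b⟩ hab
    simp only [mem_product, mem_leavesBelow] at hab
    exact Prod.ext rfl (hF.iterate_depth_sub_of_below (hab.1.2.trans (hB b hab.2)))

lemma leavesBelow_of_isLeafEdge {e : Fin n} (he : IsLeafEdge O S e) :
    leavesBelow O S e = {e} := by
  ext a
  rw [mem_leavesBelow, mem_singleton, hF.below_iff_eq_or_below_child]
  constructor
  · rintro ⟨-, rfl | ⟨c, hc, -⟩⟩
    exacts [rfl, absurd hc (he c)]
  · rintro rfl
    exact ⟨he, Or.inl rfl⟩

lemma leavesBelow_eq_biUnion {e : Fin n} (he : ¬IsLeafEdge O S e) :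
    leavesBelow O S e = (univ.filter fun c => S c = O e).biUnion (leavesBelow O S) := by
  ext a
  simp only [mem_leavesBelow, mem_biUnion, mem_filter, mem_univ, true_and]
  rw [hF.below_iff_eq_or_below_child]
  constructor
  · rintro ⟨ha, rfl | ⟨c, hc, hac⟩⟩
    exacts [absurd ha he, ⟨c, hc, ha, hac⟩]
  · rintro ⟨c, hc, ha, hac⟩
    exact ⟨ha, Or.inr ⟨c, hc, hac⟩⟩

lemma sum_rootPath_endWeight (g : ℕ) (e : Fin n) :
    ∑ b ∈ rootPath O S e, endWeight g O S b = g ^ depth O S e * (g / (g - 2)) := by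
  induction hk : depth O S e generalizing e with
  | zero =>
    have he := hF.depth_eq_zero_iff.mp hk
    simp [rootPath_of_isRootEdge he, endWeight, he, hk]
  | succ d ih =>
    have he : ¬IsRootEdge O S e := hF.depth_eq_zero_iff.not.mp (by omega)
    have hparent : depth O S (parent O S e) = d := by rw [hF.depth_parent, hk]; rfl
    rw [rootPath_eq_insert, sum_insert (mt mem_rootPath.mp (hF.not_parent_below he)),
      ih _ hparent, endWeight, if_neg he, hk]
    ring

variable {g : ℕ} (hin : ∀ e, inDeg S (O e) = 0 ∨ inDeg S (O e) = g)
include hin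

lemma sum_leavesBelow_inv_pow_depth (e : Fin n) :
    ∑ a ∈ leavesBelow O S e, ((g : ℝ) ^ depth O S a)⁻¹ = ((g : ℝ) ^ depth O S e)⁻¹ := by
  induction hk : n - depth O S e using Nat.strong_induction_on generalizing e with
  | _ k ih =>
  by_cases hleaf : IsLeafEdge O S e
  · rw [hF.leavesBelow_of_isLeafEdge hleaf, sum_singleton]
  have hchild {c : Fin n} (hc : c ∈ univ.filter fun c => S c = O e) :
      depth O S c = depth O S e + 1 :=
    hF.depth_eq_succ_of_out_eq (mem_filter.mp hc).2.symm
  have hdisj : ((univ.filter fun c => S c = O e : Finset (Fin n)) : Set (Fin n)).PairwiseDisjoint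
      (leavesBelow O S) := by
    intro c hc c' hc' hne
    refine disjoint_left.mpr fun a ha ha' => hne ?_
    rw [mem_leavesBelow] at ha ha'
    exact hF.eq_of_below_of_depth_eq ha.2 ha'.2 (by rw [hchild hc, hchild hc'])
  have hcard : inDeg S (O e) = g :=
    (hin e).resolve_left (isLeafEdge_iff_inDeg_eq_zero.not.mp hleaf)
  have hg : (g : ℝ) ≠ 0 :=
    Nat.cast_ne_zero.mpr (hcard ▸ isLeafEdge_iff_inDeg_eq_zero.not.mp hleaf)
  rw [hF.leavesBelow_eq_biUnion hleaf, sum_biUnion hdisj,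
    sum_congr rfl fun c hc => ih _ (by have := hF.depth_lt c; have := hchild hc; omega) c rfl,
    sum_congr rfl fun c hc => by rw [hchild hc], sum_const, ← inDeg, hcard, nsmul_eq_mul]
  field_simp
  ring

lemma crossSum_covering (hg : g ≠ 0) (e : Fin n) :
    crossSum O S (covering g O S) e = g / (g - 2) := by
  refine (hF.sum_leafPaths_mul (fun a => ((g : ℝ) ^ depth O S a)⁻¹) (endWeight g O S)
    (fun b hb => mem_rootPath.mp hb) (Crosses · e)
    fun p hp => by rw [hF.crosses_iff hp, mem_rootPath]).trans ?_
  rw [hF.sum_leavesBelow_inv_pow_depth hin, hF.sum_rootPath_endWeight]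
  field_simp

lemma endSum_covering (e : Fin n) :
    endSum O S (covering g O S) e = ((g : ℝ) ^ depth O S e)⁻¹ * endWeight g O S e := by
  refine (hF.sum_leafPaths_mul (fun a => ((g : ℝ) ^ depth O S a)⁻¹) (endWeight g O S)
    (B := {e}) (fun b hb => by rw [mem_singleton.mp hb]; exact .refl) (EndsAt · e)
    fun p hp => ?_).trans ?_
  · rw [endsAt_iff, mem_singleton]
    exact ⟨fun h => ⟨h ▸ hF.below_lastEdge hp, h⟩, And.right⟩
  · rw [hF.sum_leavesBelow_inv_pow_depth hin, sum_singleton]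

lemma crossBothSum_covering_parent (e : Fin n) :
    crossBothSum O S (covering g O S) e (parent O S e) =
      ((g : ℝ) ^ depth O S e)⁻¹ * ∑ b ∈ rootPath O S (parent O S e), endWeight g O S b := by
  refine (hF.sum_leafPaths_mul (fun a => ((g : ℝ) ^ depth O S a)⁻¹) (endWeight g O S)
    (fun b hb => (below_parent e).trans (mem_rootPath.mp hb))
    (fun p => Crosses p e ∧ Crosses p (parent O S e)) fun p hp => ?_).trans ?_
  · rw [hF.crosses_iff hp, hF.crosses_iff hp, mem_rootPath]
    exact ⟨fun h => ⟨h.1.1, h.2.2⟩,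
      fun h => ⟨⟨h.1, (below_parent e).trans h.2⟩, ⟨h.1.trans (below_parent e), h.2⟩⟩⟩
  · rw [hF.sum_leavesBelow_inv_pow_depth hin]

lemma endSum_sub_crossBothSum_covering (hg₀ : g ≠ 0) (hg₂ : g ≠ 2) {e : Fin n}
    (he : ¬IsRootEdge O S e) :
    endSum O S (covering g O S) e - crossBothSum O S (covering g O S) e (parent O S e) = 1 := by
  have hd : depth O S e = depth O S (parent O S e) + 1 := by
    have := hF.depth_eq_zero_iff.not.mpr he
    rw [hF.depth_parent]
    omega
  have hg₀' : (g : ℝ) ≠ 0 := Nat.cast_ne_zero.mpr hg₀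
  have hg₂' : (g : ℝ) - 2 ≠ 0 := sub_ne_zero.mpr (by exact_mod_cast hg₂)
  rw [hF.endSum_covering hin, hF.crossBothSum_covering_parent hin, hF.sum_rootPath_endWeight,
    endWeight, if_neg he, hd]
  field_simp
  ring

end IsInForest

end RepGraph

/-- For every integer `g ≥ 3`, every directed `g`-tree has a path covering of cost
`g / (g − 2)`. -/
theorem g_tree_path_covering (g : ℕ) (hg : 3 ≤ g) {n m : ℕ}
    (O S : Fin n → Fin m) (htree : IsDirectedGTree g O S) :
    ∃ x : PathIdx n → ℝ, IsPathCovering O S x ∧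
      coveringCost O S x = (g : ℝ) / ((g : ℝ) - 2) := by
  obtain ⟨hacyc, r, hr_in, hr_out, hdeg⟩ := htree
  have hO_ne_r : ∀ e, O e ≠ r := by
    simpa [outDeg, Finset.filter_eq_empty_iff] using hr_out
  have hF : RepGraph.IsInForest O S := ⟨hacyc, fun v => by
    by_cases hv : v = r
    · rw [hv, hr_out]
      exact zero_le_one
    · exact (hdeg v hv).1.le⟩
  have hin (e : Fin n) := (hdeg (O e) (hO_ne_r e)).2
  have hcross := hF.crossSum_covering hin (by omega)
  have hg' : (3 : ℝ) ≤ g := by exact_mod_cast hg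
  refine ⟨RepGraph.covering g O S,
    ⟨RepGraph.covering_nonneg hg, fun e _ => ?_, fun e f he hf => ?_⟩, ?_⟩
  · rw [hcross, le_div_iff₀ (by linarith)]
    linarith
  · rw [← hF.parent_eq hf]
    exact (hF.endSum_sub_crossBothSum_covering hin (by omega) (by omega) he).ge
  · have : Nonempty (Fin n) := by
      rcases n with _ | n
      · simp [inDeg] at hr_in
      · exact ⟨0⟩
    simp only [coveringCost, hcross, ciSup_const]
end

section
/- Let T be a directed 2-tree with N nodes. Then there exists a path covering of T of cost at most log₂ N. -/
/-!
Regard the edges as the vertices of a rooted tree: the parent of an edge is the edge leaving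
its head, and the root edge `e_r` is its own parent. Let `t e` be the number of nodes under
the edge `e` and `g e = (log₂ N - log₂ t e) / 2 ≥ 0`. Since `t e = t c₁ + t c₂` for the two
children of an inner edge, AM-GM gives `1 + 2 g e ≤ g c₁ + g c₂`. Going down from the root,
split the load `1 + 2 b e` of every inner edge among its children in proportion to `g`; this
yields weights `0 ≤ b ≤ g` with `b e_r = 0`. Route the flow back up: the path from a leaf edge
`d` to an edge `e` gets `1 + b e` times the product of the fractions `b u / (1 + 2 b (parent u))`
over the edges `u` of the path below `e`. Then each edge `e` is crossed by total weight
`1 + 2 b e ≤ 1 + 2 g e ≤ log₂ N`, of which `b e` continues to the parent edge, so the covering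
constraint at `e` holds with equality.
-/

open Function Finset

namespace RootedTree

variable {α : Type*} {f : α → α} {r u v w : α}

def Reaches (f : α → α) (u v : α) : Prop := ∃ k, f^[k] u = v

theorem Reaches.refl (f : α → α) (u : α) : Reaches f u u := ⟨0, rfl⟩

theorem reaches_apply (f : α → α) (u : α) : Reaches f u (f u) := ⟨1, rfl⟩

theorem Reaches.trans (huv : Reaches f u v) (hvw : Reaches f v w) : Reaches f u w := by
  obtain ⟨k, rfl⟩ := huv
  obtain ⟨l, rfl⟩ := hvw
  exact ⟨l + k, iterate_add_apply f l k u⟩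

theorem Reaches.total (huv : Reaches f u v) (huw : Reaches f u w) :
    Reaches f v w ∨ Reaches f w v := by
  obtain ⟨k, rfl⟩ := huv
  obtain ⟨l, rfl⟩ := huw
  rcases le_total k l with hkl | hlk
  · exact Or.inl ⟨l - k, by rw [← iterate_add_apply, Nat.sub_add_cancel hkl]⟩
  · exact Or.inr ⟨k - l, by rw [← iterate_add_apply, Nat.sub_add_cancel hlk]⟩

theorem Reaches.apply_of_ne (huv : Reaches f u v) (hne : u ≠ v) : Reaches f (f u) v := by
  obtain ⟨_ | k, rfl⟩ := huv
  · exact absurd rfl hne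
  · exact ⟨k, (iterate_succ_apply f k u).symm⟩

open scoped Classical in
/-- The number of steps from `u` to `v` under `f` (`0` if `v` is never reached). -/
noncomputable def steps (f : α → α) (u v : α) : ℕ :=
  if h : Reaches f u v then Nat.find h else 0

theorem Reaches.iterate_steps (h : Reaches f u v) : f^[steps f u v] u = v := by
  classical
  rw [steps, dif_pos h]
  exact Nat.find_spec h

theorem steps_le {k : ℕ} (h : f^[k] u = v) : steps f u v ≤ k := by
  classical
  rw [steps, dif_pos ⟨k, h⟩]
  exact Nat.find_min' _ h

theorem iterate_ne_of_lt_steps {k : ℕ} (hk : k < steps f u v) : f^[k] u ≠ v :=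
  fun h => (steps_le h).not_gt hk

theorem steps_self : steps f u u = 0 :=
  Nat.le_zero.mp (steps_le (k := 0) rfl)

theorem Reaches.steps_eq_succ (h : Reaches f u v) (hne : u ≠ v) :
    steps f u v = steps f (f u) v + 1 := by
  have hpos : steps f u v ≠ 0 := fun h0 => hne (by simpa [h0] using h.iterate_steps)
  apply le_antisymm
  · exact steps_le (by rw [iterate_succ_apply]; exact (h.apply_of_ne hne).iterate_steps)
  · have : steps f (f u) v ≤ steps f u v - 1 :=
      steps_le (by
        rw [← iterate_succ_apply, Nat.succ_eq_add_one, Nat.sub_one_add_one hpos]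
        exact h.iterate_steps)
    omega

theorem Reaches.steps_lt_card [Fintype α] (h : Reaches f u v) : steps f u v < Fintype.card α := by
  have hinj : Injective fun i : Fin (steps f u v + 1) => f^[i] u := by
    intro i j hij
    by_contra hne
    wlog hlt : i < j generalizing i j
    · exact this hij.symm (Ne.symm hne) (lt_of_le_of_ne (not_lt.1 hlt) (Ne.symm hne))
    -- a repetition before reaching `v` would give a shorter way to `v`
    have hlt : (i : ℕ) < j := hlt
    have hij : f^[i] u = f^[j] u := hij
    apply iterate_ne_of_lt_steps (f := f) (u := u) (v := v) (k := steps f u v - j + i)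
      (by omega)
    rw [iterate_add_apply, hij, ← iterate_add_apply, Nat.sub_add_cancel (by omega)]
    exact h.iterate_steps
  simpa using Fintype.card_le_of_injective _ hinj

structure IsRootedTree (f : α → α) (r : α) : Prop where
  apply_root : f r = r
  reaches_root (a : α) : Reaches f a r

theorem IsRootedTree.of_isPeriodicPt [Finite α] (hr : f r = r)
    (hper : ∀ a k, 0 < k → IsPeriodicPt f k a → a = r) : IsRootedTree f r where
  apply_root := hr
  reaches_root a := by
    obtain ⟨i, j, hne, hij⟩ := Finite.exists_ne_map_eq_of_infinite fun k => f^[k] a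
    wlog hlt : i < j generalizing i j
    · exact this j i hne.symm hij.symm (by omega)
    refine ⟨i, hper _ (j - i) (by omega) ?_⟩
    rw [IsPeriodicPt, IsFixedPt, ← iterate_add_apply, Nat.sub_add_cancel hlt.le]
    exact hij.symm

namespace IsRootedTree

variable (h : IsRootedTree f r)
include h

theorem iterate_root (k : ℕ) : f^[k] r = r := iterate_fixed h.apply_root k

theorem eq_root_of_reaches (hv : Reaches f r v) : v = r := by
  obtain ⟨k, rfl⟩ := hv
  exact h.iterate_root k

theorem eq_root_of_isPeriodicPt {a : α} {k : ℕ} (hk : 0 < k) (ha : IsPeriodicPt f k a) :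
    a = r := by
  obtain ⟨l, hl⟩ := h.reaches_root a
  rw [← (ha.mul_const l).eq, ← Nat.sub_add_cancel (Nat.le_mul_of_pos_left l hk),
    iterate_add_apply, hl, h.iterate_root]

theorem apply_ne_self (hu : u ≠ r) : f u ≠ u :=
  fun hfu => hu (h.eq_root_of_isPeriodicPt one_pos (by simpa [IsPeriodicPt, IsFixedPt] using hfu))

theorem antisymm (huv : Reaches f u v) (hvu : Reaches f v u) : u = v := by
  obtain ⟨k, rfl⟩ := huv
  obtain ⟨l, hl⟩ := hvu
  rcases Nat.eq_zero_or_pos (l + k) with hlk | hlk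
  · rw [show k = 0 by omega]; rfl
  · have hu : u = r := h.eq_root_of_isPeriodicPt hlk
      (by rw [IsPeriodicPt, IsFixedPt, iterate_add_apply, hl])
    rw [hu, h.iterate_root]

theorem iterate_ne_root_of_lt_steps (huv : Reaches f u v) {k : ℕ} (hk : k < steps f u v) :
    f^[k] u ≠ r := by
  intro hkr
  have hv : v = r := by
    rw [← huv.iterate_steps, ← Nat.sub_add_cancel hk.le, iterate_add_apply, hkr, h.iterate_root]
  exact iterate_ne_of_lt_steps hk (hkr.trans hv.symm)

theorem steps_apply_lt (hu : u ≠ r) : steps f (f u) r < steps f u r := by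
  rw [(h.reaches_root u).steps_eq_succ hu]
  exact Nat.lt_succ_self _

end IsRootedTree

noncomputable def pathProd (f : α → α) (ρ : α → ℝ) (d e : α) : ℝ :=
  ∏ i ∈ range (steps f d e), ρ (f^[i] d)

theorem pathProd_self (ρ : α → ℝ) (d : α) : pathProd f ρ d d = 1 := by
  simp [pathProd, steps_self]

theorem Reaches.pathProd_eq_mul {d e : α} (hde : Reaches f d e) (hne : d ≠ e) (ρ : α → ℝ) :
    pathProd f ρ d e = ρ d * pathProd f ρ (f d) e := by
  simp only [pathProd, hde.steps_eq_succ hne, prod_range_succ', iterate_succ_apply,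
    iterate_zero_apply, mul_comm]

theorem IsRootedTree.pathProd_trans (h : IsRootedTree f r) {d e e' : α} (hde : Reaches f d e)
    (hee' : Reaches f e e') (ρ : α → ℝ) :
    pathProd f ρ d e' = pathProd f ρ d e * pathProd f ρ e e' := by
  induction hk : steps f d e generalizing d with
  | zero =>
    obtain rfl : d = e := by simpa [hk] using hde.iterate_steps
    rw [pathProd_self, one_mul]
  | succ k ih =>
    have hne : d ≠ e := by rintro rfl; simp [steps_self] at hk
    have hne' : d ≠ e' := by rintro rfl; exact hne (h.antisymm hde hee')
    rw [hde.pathProd_eq_mul hne, (hde.trans hee').pathProd_eq_mul hne',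
      ih (hde.apply_of_ne hne) (by rw [hde.steps_eq_succ hne] at hk; omega), mul_assoc]

/-- The fraction of the load of `f u` that arrives through `u`. -/
noncomputable def share (f : α → α) (b : α → ℝ) (u : α) : ℝ := b u / (1 + 2 * b (f u))

noncomputable def pathWeight (f : α → α) (b : α → ℝ) (d e : α) : ℝ :=
  (1 + b e) * pathProd f (share f b) d e

theorem IsRootedTree.pathWeight_trans (h : IsRootedTree f r) {d v e : α} (hdv : Reaches f d v)
    (hve : Reaches f v e) :
    pathWeight f b d e = pathProd f (share f b) d v * pathWeight f b v e := by
  rw [pathWeight, pathWeight, h.pathProd_trans hdv hve]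
  ring

open scoped Classical

section Subtrees

variable [Fintype α]

noncomputable def children (f : α → α) (r v : α) : Finset α :=
  univ.filter fun c => c ≠ r ∧ f c = v

def IsLeaf (f : α → α) (r v : α) : Prop := ∀ c, c ≠ r → f c ≠ v

noncomputable def below (f : α → α) (v : α) : Finset α := univ.filter (Reaches f · v)

noncomputable def above (f : α → α) (u : α) : Finset α := univ.filter (Reaches f u ·)

noncomputable def leavesBelow (f : α → α) (r v : α) : Finset α :=
  (below f v).filter (IsLeaf f r)

@[simp] theorem mem_children {c : α} : c ∈ children f r v ↔ c ≠ r ∧ f c = v := by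
  simp [children]

@[simp] theorem mem_below {d : α} : d ∈ below f v ↔ Reaches f d v := by simp [below]

@[simp] theorem mem_above {e : α} : e ∈ above f u ↔ Reaches f u e := by simp [above]

@[simp] theorem mem_leavesBelow {d : α} :
    d ∈ leavesBelow f r v ↔ Reaches f d v ∧ IsLeaf f r d := by
  simp [leavesBelow]

theorem not_isLeaf_iff : ¬IsLeaf f r v ↔ (children f r v).Nonempty := by
  simp [IsLeaf, Finset.Nonempty]

theorem above_eq_insert (u : α) : above f u = insert u (above f (f u)) := by
  ext e
  rw [mem_insert, mem_above, mem_above]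
  constructor
  · intro hue
    by_cases hne : e = u
    · exact Or.inl hne
    · exact Or.inr (hue.apply_of_ne (Ne.symm hne))
  · rintro (rfl | hfe)
    · exact Reaches.refl f e
    · exact (reaches_apply f u).trans hfe

namespace IsRootedTree

variable (h : IsRootedTree f r)
include h

theorem exists_mem_children_of_reaches {d : α} (hdv : Reaches f d v) (hne : d ≠ v) :
    ∃ c ∈ children f r v, Reaches f d c := by
  obtain ⟨k, hk⟩ := hdv
  induction k generalizing v with
  | zero => exact absurd hk hne
  | succ k ih =>
    rw [iterate_succ_apply'] at hk
    by_cases hkr : f^[k] d = r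
    · rw [hkr, h.apply_root] at hk
      exact ih hne (hkr.trans hk)
    · exact ⟨f^[k] d, mem_children.2 ⟨hkr, hk⟩, k, rfl⟩

theorem not_reaches_of_mem_children {c : α} (hc : c ∈ children f r v) : ¬Reaches f v c := by
  intro hvc
  rw [mem_children] at hc
  exact h.apply_ne_self hc.1 (hc.2.trans (h.antisymm hvc (hc.2 ▸ reaches_apply f c)))

theorem below_eq_insert_biUnion (v : α) :
    below f v = insert v ((children f r v).biUnion (below f)) := by
  ext d
  simp only [mem_insert, mem_biUnion, mem_below]
  constructor
  · intro hdv
    by_cases hne : d = v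
    · exact Or.inl hne
    · exact Or.inr (h.exists_mem_children_of_reaches hdv hne)
  · rintro (rfl | ⟨c, hc, hdc⟩)
    · exact Reaches.refl f d
    · exact hdc.trans ((mem_children.1 hc).2 ▸ reaches_apply f c)

theorem notMem_biUnion_below_children (v : α) :
    v ∉ (children f r v).biUnion (below f) := by
  simp only [mem_biUnion, mem_below, not_exists, not_and]
  exact fun c hc => h.not_reaches_of_mem_children hc

theorem pairwiseDisjoint_below_children (v : α) :
    (children f r v : Set α).PairwiseDisjoint (below f) := by
  intro c₁ hc₁ c₂ hc₂ hne
  rw [Function.onFun, Finset.disjoint_left]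
  intro d hd₁ hd₂
  rw [mem_coe, mem_children] at hc₁ hc₂
  rw [mem_below] at hd₁ hd₂
  -- the lower of the two children would reach the other one through their common parent `v`
  rcases hd₁.total hd₂ with h₁₂ | h₂₁
  · exact h.not_reaches_of_mem_children (mem_children.2 hc₂)
      (hc₁.2 ▸ h₁₂.apply_of_ne hne)
  · exact h.not_reaches_of_mem_children (mem_children.2 hc₁)
      (hc₂.2 ▸ h₂₁.apply_of_ne hne.symm)

theorem sum_below {M : Type*} [AddCommMonoid M] (φ : α → M) (v : α) :
    ∑ d ∈ below f v, φ d = φ v + ∑ c ∈ children f r v, ∑ d ∈ below f c, φ d := by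
  rw [h.below_eq_insert_biUnion v, sum_insert (h.notMem_biUnion_below_children v),
    sum_biUnion (h.pairwiseDisjoint_below_children v)]

theorem card_below (v : α) : #(below f v) = 1 + ∑ c ∈ children f r v, #(below f c) := by
  simpa only [card_eq_sum_ones] using h.sum_below (fun _ => 1) v

theorem card_below_lt {c : α} (hc : c ∈ children f r v) : #(below f c) < #(below f v) := by
  rw [h.card_below v]
  have := single_le_sum (f := fun c => #(below f c)) (fun _ _ => Nat.zero_le _) hc
  omega

theorem leavesBelow_of_isLeaf (hv : IsLeaf f r v) : leavesBelow f r v = {v} := by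
  ext d
  rw [mem_leavesBelow, mem_singleton]
  constructor
  · rintro ⟨hdv, -⟩
    by_contra hne
    obtain ⟨c, hc, -⟩ := h.exists_mem_children_of_reaches hdv hne
    exact hv c (mem_children.1 hc).1 (mem_children.1 hc).2
  · rintro rfl
    exact ⟨Reaches.refl f d, hv⟩

theorem sum_leavesBelow_of_not_isLeaf {M : Type*} [AddCommMonoid M] (φ : α → M)
    (hv : ¬IsLeaf f r v) :
    ∑ d ∈ leavesBelow f r v, φ d
      = ∑ c ∈ children f r v, ∑ d ∈ leavesBelow f r c, φ d := by
  simp only [leavesBelow, sum_filter]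
  rw [h.sum_below, if_neg hv, zero_add]

theorem above_root : above f r = {r} := by
  ext e
  rw [mem_above, mem_singleton]
  exact ⟨h.eq_root_of_reaches, fun he => he ▸ Reaches.refl f r⟩

theorem notMem_above_apply (hu : u ≠ r) : u ∉ above f (f u) := by
  rw [mem_above]
  exact fun hfu => h.apply_ne_self hu (h.antisymm (reaches_apply f u) hfu).symm

end IsRootedTree

end Subtrees

section Flow

variable [Fintype α] {b : α → ℝ}

structure IsFlowSplit (f : α → α) (r : α) (b : α → ℝ) : Prop where
  nonneg : ∀ u, 0 ≤ b u
  root : b r = 0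
  sum_children : ∀ v, ¬IsLeaf f r v → ∑ c ∈ children f r v, b c = 1 + 2 * b v

namespace IsFlowSplit

variable (hb : IsFlowSplit f r b)
include hb

theorem one_add_two_mul_pos (u : α) : 0 < 1 + 2 * b u := by
  linarith [hb.nonneg u]

theorem share_mul (u : α) : share f b u * (1 + 2 * b (f u)) = b u :=
  div_mul_cancel₀ _ (hb.one_add_two_mul_pos (f u)).ne'

theorem pathWeight_nonneg (d e : α) : 0 ≤ pathWeight f b d e :=
  mul_nonneg (by linarith [hb.nonneg e])
    (prod_nonneg fun _ _ => div_nonneg (hb.nonneg _) (hb.one_add_two_mul_pos _).le)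

theorem sum_above_pathWeight (h : IsRootedTree f r) (u : α) :
    ∑ e ∈ above f u, pathWeight f b u e = 1 + 2 * b u := by
  by_cases hu : u = r
  · subst hu
    rw [h.above_root, sum_singleton, pathWeight, pathProd_self, hb.root]
    norm_num
  · rw [above_eq_insert, sum_insert (h.notMem_above_apply hu), pathWeight, pathProd_self]
    have hstep : ∀ e ∈ above f (f u),
        pathWeight f b u e = share f b u * pathWeight f b (f u) e := by
      intro e he
      rw [mem_above] at he
      rw [h.pathWeight_trans (reaches_apply f u) he, Reaches.pathProd_eq_mul (reaches_apply f u)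
        (h.apply_ne_self hu).symm, pathProd_self, mul_one]
    rw [sum_congr rfl hstep, ← mul_sum, sum_above_pathWeight h (f u), hb.share_mul]
    ring
termination_by steps f u r
decreasing_by exact h.steps_apply_lt hu

theorem sum_leavesBelow_pathProd (h : IsRootedTree f r) (v : α) :
    ∑ d ∈ leavesBelow f r v, pathProd f (share f b) d v = 1 := by
  by_cases hv : IsLeaf f r v
  · rw [h.leavesBelow_of_isLeaf hv, sum_singleton, pathProd_self]
  rw [h.sum_leavesBelow_of_not_isLeaf _ hv]
  have hchild : ∀ c ∈ children f r v,
      ∑ d ∈ leavesBelow f r c, pathProd f (share f b) d v = b c / (1 + 2 * b v) := by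
    intro c hc
    have hcv := mem_children.1 hc
    have hrc : Reaches f c v := hcv.2 ▸ reaches_apply f c
    have hcv' : c ≠ v := fun hcv' => h.apply_ne_self hcv.1 (hcv.2.trans hcv'.symm)
    rw [sum_congr rfl fun d hd => h.pathProd_trans (mem_leavesBelow.1 hd).1 hrc _, ← sum_mul,
      sum_leavesBelow_pathProd h c, one_mul, hrc.pathProd_eq_mul hcv', hcv.2, pathProd_self,
      mul_one, share, hcv.2]
  rw [sum_congr rfl hchild, ← sum_div, hb.sum_children v hv,
    div_self (hb.one_add_two_mul_pos v).ne']
termination_by #(below f v)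
decreasing_by exact h.card_below_lt ‹_›

theorem sum_leavesBelow_sum_above_pathWeight (h : IsRootedTree f r) {u v : α}
    (huv : Reaches f u v) :
    ∑ d ∈ leavesBelow f r u, ∑ e ∈ above f v, pathWeight f b d e
      = pathProd f (share f b) u v * (1 + 2 * b v) := by
  have hterm : ∀ d ∈ leavesBelow f r u, ∑ e ∈ above f v, pathWeight f b d e
      = pathProd f (share f b) d u * (pathProd f (share f b) u v * (1 + 2 * b v)) := by
    intro d hd
    have hdu := (mem_leavesBelow.1 hd).1
    rw [← hb.sum_above_pathWeight h v, mul_sum, mul_sum]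
    refine sum_congr rfl fun e he => ?_
    rw [h.pathWeight_trans (hdu.trans huv) (mem_above.1 he), h.pathProd_trans hdu huv, mul_assoc]
  rw [sum_congr rfl hterm, ← sum_mul, hb.sum_leavesBelow_pathProd h u, one_mul]

end IsFlowSplit

end Flow

section Weights

variable {g : α → ℝ}

theorem not_isLeaf_apply (hu : u ≠ r) : ¬IsLeaf f r (f u) := fun hl => hl u hu rfl

variable [Fintype α]

noncomputable def splitWeight (h : IsRootedTree f r) (g : α → ℝ) (u : α) : ℝ :=
  if hu : u = r then 0
  else g u * (1 + 2 * splitWeight h g (f u)) / ∑ c ∈ children f r (f u), g c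
termination_by steps f u r
decreasing_by exact h.steps_apply_lt hu

namespace IsRootedTree

variable (h : IsRootedTree f r)

theorem splitWeight_root : splitWeight h g r = 0 := by
  rw [splitWeight, dif_pos rfl]

theorem splitWeight_of_ne (hu : u ≠ r) :
    splitWeight h g u
      = g u * (1 + 2 * splitWeight h g (f u)) / ∑ c ∈ children f r (f u), g c := by
  rw [splitWeight, dif_neg hu]

variable (hg : ∀ u, 0 ≤ g u)
  (hsuper : ∀ v, ¬IsLeaf f r v → 1 + 2 * g v ≤ ∑ c ∈ children f r v, g c)
include hg

theorem splitWeight_nonneg (u : α) : 0 ≤ splitWeight h g u := by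
  by_cases hu : u = r
  · rw [hu, h.splitWeight_root]
  · rw [h.splitWeight_of_ne hu]
    have := splitWeight_nonneg (f u)
    exact div_nonneg (mul_nonneg (hg u) (by linarith)) (sum_nonneg fun c _ => hg c)
termination_by steps f u r
decreasing_by exact h.steps_apply_lt hu

include hsuper

theorem splitWeight_le (u : α) : splitWeight h g u ≤ g u := by
  by_cases hu : u = r
  · rw [hu, h.splitWeight_root]
    exact hg r
  · have hle : 1 + 2 * splitWeight h g (f u) ≤ ∑ c ∈ children f r (f u), g c := by
      linarith [splitWeight_le (f u), hsuper (f u) (not_isLeaf_apply hu)]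
    rw [h.splitWeight_of_ne hu, mul_div_assoc]
    exact mul_le_of_le_one_right (hg u)
      (div_le_one_of_le₀ hle (by linarith [h.splitWeight_nonneg hg (f u)]))
termination_by steps f u r
decreasing_by exact h.steps_apply_lt hu

theorem isFlowSplit_splitWeight : IsFlowSplit f r (splitWeight h g) where
  nonneg := h.splitWeight_nonneg hg
  root := h.splitWeight_root
  sum_children v hv := by
    have hpos : 0 < ∑ c ∈ children f r v, g c := by
      linarith [hsuper v hv, h.splitWeight_nonneg hg v, h.splitWeight_le hg hsuper v]
    rw [sum_congr rfl fun c hc =>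
        (mem_children.1 hc).2 ▸ h.splitWeight_of_ne (mem_children.1 hc).1,
      ← sum_div, ← sum_mul, mul_div_cancel_left₀ _ hpos.ne']

end IsRootedTree

/-- For the edges of a 2-tree, the number of nodes under the edge `v`. -/
noncomputable def subtreeSize (f : α → α) (v : α) : ℕ := #(below f v) + 1

noncomputable def potential (f : α → α) (v : α) : ℝ :=
  (Real.logb 2 (Fintype.card α + 1) - Real.logb 2 (subtreeSize f v)) / 2

theorem two_le_subtreeSize (v : α) : 2 ≤ subtreeSize f v := by
  have : 0 < #(below f v) := card_pos.2 ⟨v, mem_below.2 (Reaches.refl f v)⟩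
  rw [subtreeSize]
  omega

theorem potential_nonneg (v : α) : 0 ≤ potential f v := by
  have hsize : (subtreeSize f v : ℝ) ≤ Fintype.card α + 1 := by
    rw [subtreeSize]
    exact_mod_cast Nat.add_le_add_right (card_le_univ _) 1
  have hpos : (0 : ℝ) < subtreeSize f v := by
    exact_mod_cast (Nat.lt_of_lt_of_le two_pos (two_le_subtreeSize v))
  rw [potential]
  linarith [Real.logb_le_logb_of_le one_lt_two hpos hsize]

theorem one_add_two_mul_potential_le (v : α) :
    1 + 2 * potential f v ≤ Real.logb 2 (Fintype.card α + 1) := by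
  have hsize : (2 : ℝ) ≤ subtreeSize f v := by exact_mod_cast two_le_subtreeSize v
  have := Real.logb_le_logb_of_le one_lt_two two_pos hsize
  rw [Real.logb_self_eq_one one_lt_two] at this
  rw [potential]
  linarith

theorem two_add_logb_add_logb_le {a b : ℝ} (ha : 0 < a) (hb : 0 < b) :
    2 + Real.logb 2 a + Real.logb 2 b ≤ 2 * Real.logb 2 (a + b) := by
  have h4 : (4 : ℝ) = 2 ^ (2 : ℕ) := by norm_num
  have hamgm : 4 * (a * b) ≤ (a + b) ^ 2 := by nlinarith [sq_nonneg (a - b)]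
  have := Real.logb_le_logb_of_le one_lt_two (by positivity) hamgm
  rw [Real.logb_mul (by norm_num) (by positivity), Real.logb_mul ha.ne' hb.ne', h4,
    Real.logb_pow, Real.logb_pow, Real.logb_self_eq_one one_lt_two] at this
  push_cast at this
  linarith

theorem IsRootedTree.one_add_two_mul_potential_le_sum (h : IsRootedTree f r)
    (hbin : #(children f r v) = 2) :
    1 + 2 * potential f v ≤ ∑ c ∈ children f r v, potential f c := by
  obtain ⟨c₁, c₂, hne, hc⟩ := card_eq_two.1 hbin
  have hsize : subtreeSize f v = subtreeSize f c₁ + subtreeSize f c₂ := by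
    simp only [subtreeSize, h.card_below v, hc, sum_pair hne]
    ring
  have hpos : ∀ c, (0 : ℝ) < subtreeSize f c := fun c => by
    exact_mod_cast (Nat.lt_of_lt_of_le two_pos (two_le_subtreeSize c))
  have := two_add_logb_add_logb_le (hpos c₁) (hpos c₂)
  rw [hc, sum_pair hne]
  simp only [potential, hsize, Nat.cast_add]
  linarith

theorem IsRootedTree.exists_isFlowSplit (h : IsRootedTree f r)
    (hbin : ∀ v, ¬IsLeaf f r v → #(children f r v) = 2) :
    ∃ b, IsFlowSplit f r b ∧ ∀ u, 1 + 2 * b u ≤ Real.logb 2 (Fintype.card α + 1) := by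
  have hsuper v hv := h.one_add_two_mul_potential_le_sum (hbin v hv)
  refine ⟨splitWeight h (potential f), h.isFlowSplit_splitWeight potential_nonneg hsuper,
    fun u => ?_⟩
  linarith [h.splitWeight_le potential_nonneg hsuper u, one_add_two_mul_potential_le (f := f) u]

end Weights

section Paths

variable {n : ℕ} {f : Fin n → Fin n} {r : Fin n} {p : PathIdx n}

def IsUpwardPath (f : Fin n → Fin n) (r : Fin n) (p : PathIdx n) : Prop :=
  ∀ j : Fin p.1, p.2 j.castSucc ≠ r ∧ f (p.2 j.castSucc) = p.2 j.succ

namespace IsUpwardPath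

variable (hp : IsUpwardPath f r p)
include hp

theorem apply_eq_iterate (j : Fin (p.1 + 1)) : p.2 j = f^[j] (p.2 0) := by
  induction j using Fin.induction with
  | zero => rfl
  | succ j ih => rw [← (hp j).2, ih, Fin.val_succ, Fin.val_castSucc, iterate_succ_apply']

theorem reaches_last : Reaches f (p.2 0) (p.2 (Fin.last _)) :=
  ⟨p.1, by rw [hp.apply_eq_iterate (Fin.last _), Fin.val_last]⟩

theorem steps_eq (h : IsRootedTree f r) : steps f (p.2 0) (p.2 (Fin.last _)) = p.1 := by
  refine le_antisymm (steps_le (by rw [hp.apply_eq_iterate (Fin.last _), Fin.val_last]))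
    (not_lt.1 fun hlt => ?_)
  set s := steps f (p.2 0) (p.2 (Fin.last _))
  have hs : f^[s] (p.2 0) = p.2 (Fin.last _) := hp.reaches_last.iterate_steps
  -- reaching the last edge early would close a cycle avoiding the root
  have hper : IsPeriodicPt f (p.1 - s) (p.2 (Fin.last _)) := by
    rw [IsPeriodicPt, IsFixedPt, ← hs, ← iterate_add_apply, Nat.sub_add_cancel hlt.le, hs,
      hp.apply_eq_iterate (Fin.last _), Fin.val_last]
  have hroot := h.eq_root_of_isPeriodicPt (Nat.sub_pos_of_lt hlt) hper
  exact (hp ⟨s, hlt⟩).1 (by rw [hp.apply_eq_iterate, Fin.val_castSucc, hs, hroot])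

theorem ext (h : IsRootedTree f r) {q : PathIdx n} (hq : IsUpwardPath f r q)
    (h0 : p.2 0 = q.2 0) (hlast : p.2 (Fin.last _) = q.2 (Fin.last _)) : p = q := by
  have hlen : (p.1 : ℕ) = q.1 := by rw [← hp.steps_eq h, ← hq.steps_eq h, h0, hlast]
  obtain ⟨t, p'⟩ := p
  obtain ⟨t', q'⟩ := q
  obtain rfl : t = t' := Fin.ext hlen
  congr
  funext j
  exact (hp.apply_eq_iterate j).trans ((congrArg _ h0).trans (hq.apply_eq_iterate j).symm)

theorem crosses_iff (h : IsRootedTree f r) (e : Fin n) :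
    Crosses p e ↔ Reaches f (p.2 0) e ∧ Reaches f e (p.2 (Fin.last _)) := by
  constructor
  · rintro ⟨j, rfl⟩
    refine ⟨⟨j, (hp.apply_eq_iterate j).symm⟩, ⟨p.1 - j, ?_⟩⟩
    rw [hp.apply_eq_iterate (Fin.last _), hp.apply_eq_iterate j, ← iterate_add_apply,
      Fin.val_last, Nat.sub_add_cancel (Nat.le_of_lt_succ j.isLt)]
  · rintro ⟨⟨k, rfl⟩, hlast⟩
    by_cases hk : k ≤ p.1
    · exact ⟨⟨k, Nat.lt_succ_of_le hk⟩, hp.apply_eq_iterate _⟩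
    · refine ⟨Fin.last _, h.antisymm ?_ hlast⟩
      refine ⟨k - p.1, ?_⟩
      rw [hp.apply_eq_iterate (Fin.last _), Fin.val_last, ← iterate_add_apply,
        Nat.sub_add_cancel (by omega)]

theorem endsAt_iff_not_crosses_apply (h : IsRootedTree f r) {e : Fin n} (hce : Crosses p e)
    (he : e ≠ r) : EndsAt p e ↔ ¬Crosses p (f e) := by
  rw [hp.crosses_iff h] at hce
  rw [EndsAt, hp.crosses_iff h, not_and]
  constructor
  · rintro hlast - hfe
    rw [hlast] at hfe
    exact h.apply_ne_self he (h.antisymm (reaches_apply f e) hfe).symm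
  · intro hfe
    by_contra hne
    exact hfe (hce.1.trans (reaches_apply f e)) (hce.2.apply_of_ne (Ne.symm hne))

end IsUpwardPath

theorem IsRootedTree.exists_isUpwardPath (h : IsRootedTree f r) {d e : Fin n}
    (hde : Reaches f d e) :
    ∃ p, IsUpwardPath f r p ∧ p.2 0 = d ∧ p.2 (Fin.last _) = e :=
  ⟨⟨⟨steps f d e, by simpa using hde.steps_lt_card⟩, fun j => f^[j] d⟩,
    fun j => ⟨h.iterate_ne_root_of_lt_steps hde j.isLt, by simp [iterate_succ_apply']⟩,
    rfl, hde.iterate_steps⟩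

theorem IsRootedTree.sum_upwardPaths (h : IsRootedTree f r) (w : Fin n → Fin n → ℝ)
    {u v : Fin n} (huv : Reaches f u v) :
    ∑ p ∈ univ.filter (fun p => (IsLeaf f r (p.2 0) ∧ IsUpwardPath f r p) ∧
        Reaches f (p.2 0) u ∧ Reaches f v (p.2 (Fin.last _))), w (p.2 0) (p.2 (Fin.last _))
      = ∑ d ∈ leavesBelow f r u, ∑ e ∈ above f v, w d e := by
  rw [← sum_product']
  refine sum_nbij (fun p => (p.2 0, p.2 (Fin.last _))) ?_ ?_ ?_ fun _ _ => rfl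
  · intro p hp
    simp only [mem_filter, mem_univ, true_and] at hp
    simp [hp.1.1, hp.2.1, hp.2.2]
  · intro p hp q hq hpq
    simp only [coe_filter, mem_univ, true_and] at hp hq
    exact hp.1.2.ext h hq.1.2 (congrArg Prod.fst hpq) (congrArg Prod.snd hpq)
  · rintro ⟨d, e⟩ hde
    simp only [coe_product, Set.mem_prod, mem_coe, mem_leavesBelow, mem_above] at hde
    obtain ⟨p, hp, rfl, rfl⟩ := h.exists_isUpwardPath (hde.1.1.trans (huv.trans hde.2))
    exact ⟨p, by simp [hp, hde.1.1, hde.1.2, hde.2], rfl⟩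

end Paths

end RootedTree

open RootedTree

section TwoTree

open scoped Classical

variable {n m : ℕ} {O S : Fin n → Fin m} {r : Fin m} {er : Fin n}

/-- The edge leaving the head of `e`, or `e` itself if there is none. -/
noncomputable def parentEdge (O S : Fin n → Fin m) (e : Fin n) : Fin n :=
  if h : ∃ f, O f = S e then h.choose else e

theorem parentEdge_eq_of_O_eq (hO : Injective O) {e f : Fin n} (hf : O f = S e) :
    parentEdge O S e = f := by
  have hex : ∃ f, O f = S e := ⟨f, hf⟩
  rw [parentEdge, dif_pos hex]
  exact hO (hex.choose_spec.trans hf.symm)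

structure IsRootedAt (O S : Fin n → Fin m) (r : Fin m) (er : Fin n) : Prop where
  injective_O : Injective O
  O_ne_root (e : Fin n) : O e ≠ r
  exists_O_eq (v : Fin m) : v ≠ r → ∃ e, O e = v
  S_eq_root_iff (e : Fin n) : S e = r ↔ e = er

theorem exists_isRootedAt (hin : inDeg S r = 1) (hout : outDeg O r = 0)
    (hdeg : ∀ v, v ≠ r → outDeg O v = 1) : ∃ er, IsRootedAt O S r er := by
  obtain ⟨er, her⟩ := card_eq_one.1 hin
  have hOr : ∀ e, O e ≠ r := fun e => by
    simpa using filter_eq_empty_iff.1 (card_eq_zero.1 hout) (mem_univ e)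
  refine ⟨er, ⟨fun a b hab => ?_, hOr, fun v hv => ?_,
    fun e => by simpa using Finset.ext_iff.1 her e⟩⟩
  · exact card_le_one.1 (hdeg (O a) (hOr a)).le a (by simp) b (by simp [hab])
  · obtain ⟨a, ha⟩ := card_eq_one.1 (hdeg v hv)
    exact ⟨a, by simpa using Finset.ext_iff.1 ha a⟩

namespace IsRootedAt

variable (hR : IsRootedAt O S r er)
include hR

theorem card_lt : n < m := by
  simpa using Fintype.card_lt_of_injective_of_notMem O hR.injective_O (b := r)
    (by simpa using hR.O_ne_root)

theorem parentEdge_root : parentEdge O S er = er := by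
  rw [parentEdge, dif_neg]
  rw [(hR.S_eq_root_iff er).2 rfl]
  exact fun ⟨f, hf⟩ => hR.O_ne_root f hf

theorem S_eq_O_iff {c e : Fin n} : S c = O e ↔ c ≠ er ∧ parentEdge O S c = e := by
  constructor
  · intro hce
    refine ⟨fun hc => hR.O_ne_root e ?_, parentEdge_eq_of_O_eq hR.injective_O hce.symm⟩
    rw [← hce, (hR.S_eq_root_iff c).2 hc]
  · rintro ⟨hc, rfl⟩
    obtain ⟨f, hf⟩ := hR.exists_O_eq (S c) (mt (hR.S_eq_root_iff c).1 hc)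
    rw [parentEdge_eq_of_O_eq hR.injective_O hf, hf]

theorem isRootEdge_iff {e : Fin n} : IsRootEdge O S e ↔ e = er := by
  constructor
  · intro he
    by_contra hne
    obtain ⟨f, hf⟩ := hR.exists_O_eq (S e) (mt (hR.S_eq_root_iff e).1 hne)
    exact he f hf
  · rintro rfl i
    rw [(hR.S_eq_root_iff _).2 rfl]
    exact hR.O_ne_root i

theorem isRootedTree (hacyc : NoDirectedCycle O S) : IsRootedTree (parentEdge O S) er := by
  refine .of_isPeriodicPt hR.parentEdge_root fun a k hk ha => ?_
  by_contra hne
  have havoid : ∀ j, (parentEdge O S)^[j] a ≠ er := by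
    intro j hj
    apply hne
    rw [← (ha.mul_const j).eq, ← Nat.sub_add_cancel (Nat.le_mul_of_pos_left j hk),
      iterate_add_apply, hj, iterate_fixed hR.parentEdge_root]
  obtain ⟨t, rfl⟩ : ∃ t, k = t + 1 := ⟨k - 1, by omega⟩
  refine hacyc t (fun j => (parentEdge O S)^[j] a) fun j => ?_
  rw [Fin.val_add, Fin.val_one', Nat.add_mod_mod, ha.iterate_mod_apply, iterate_succ_apply']
  exact hR.S_eq_O_iff.2 ⟨havoid j, rfl⟩

theorem isLeaf_iff {d : Fin n} : IsLeaf (parentEdge O S) er d ↔ ∀ i, S i ≠ O d := by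
  simp only [IsLeaf, ne_eq, hR.S_eq_O_iff, not_and]

theorem isLeafPath_iff {p : PathIdx n} :
    IsLeafPath O S p ↔
      IsLeaf (parentEdge O S) er (p.2 0) ∧ IsUpwardPath (parentEdge O S) er p := by
  rw [IsLeafPath, IsUpwardPath, hR.isLeaf_iff, and_comm]
  simp only [hR.S_eq_O_iff]

theorem card_children (e : Fin n) : #(children (parentEdge O S) er e) = inDeg S (O e) := by
  simp only [inDeg, children]
  congr 1
  ext c
  simp [hR.S_eq_O_iff]

theorem sum_filter_leafPaths (hacyc : NoDirectedCycle O S) (w : Fin n → Fin n → ℝ)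
    {u v : Fin n} (huv : Reaches (parentEdge O S) u v) (P : PathIdx n → Prop) [DecidablePred P]
    (hP : ∀ p, P p ↔ IsLeafPath O S p ∧ Reaches (parentEdge O S) (p.2 0) u ∧
      Reaches (parentEdge O S) v (p.2 (Fin.last _))) :
    ∑ p ∈ univ.filter P, w (p.2 0) (p.2 (Fin.last _))
      = ∑ d ∈ leavesBelow (parentEdge O S) er u, ∑ e ∈ above (parentEdge O S) v, w d e := by
  rw [← (hR.isRootedTree hacyc).sum_upwardPaths w huv]
  refine sum_congr (filter_congr fun p _ => ?_) fun _ _ => rfl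
  rw [hP, hR.isLeafPath_iff]

theorem crossSum_eq_endSum_add_crossBothSum (hacyc : NoDirectedCycle O S) (x : PathIdx n → ℝ)
    {e : Fin n} (he : e ≠ er) :
    crossSum O S x e = endSum O S x e + crossBothSum O S x e (parentEdge O S e) := by
  have h := hR.isRootedTree hacyc
  rw [crossSum, ← sum_filter_add_sum_filter_not _ fun p => Crosses p (parentEdge O S e),
    add_comm, filter_filter, filter_filter, endSum, crossBothSum]
  congr 1
  · refine sum_congr (filter_congr fun p _ => ?_) fun _ _ => rfl
    constructor
    · rintro ⟨⟨hp, hce⟩, hnot⟩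
      exact ⟨hp, ((hR.isLeafPath_iff.1 hp).2.endsAt_iff_not_crosses_apply h hce he).2 hnot⟩
    · rintro ⟨hp, hend⟩
      have hce : Crosses p e := ⟨Fin.last _, hend⟩
      exact ⟨⟨hp, hce⟩,
        ((hR.isLeafPath_iff.1 hp).2.endsAt_iff_not_crosses_apply h hce he).1 hend⟩
  · exact sum_congr (filter_congr fun p _ => and_assoc) fun _ _ => rfl

variable {b : Fin n → ℝ}

theorem crossSum_pathWeight (hacyc : NoDirectedCycle O S)
    (hb : IsFlowSplit (parentEdge O S) er b) (e : Fin n) :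
    crossSum O S (fun p => pathWeight (parentEdge O S) b (p.2 0) (p.2 (Fin.last _))) e
      = 1 + 2 * b e := by
  have h := hR.isRootedTree hacyc
  have hP : ∀ p, IsLeafPath O S p ∧ Crosses p e ↔ IsLeafPath O S p ∧
      Reaches (parentEdge O S) (p.2 0) e ∧ Reaches (parentEdge O S) e (p.2 (Fin.last _)) :=
    fun p => and_congr_right fun hp => (hR.isLeafPath_iff.1 hp).2.crosses_iff h e
  rw [crossSum, hR.sum_filter_leafPaths hacyc _ (Reaches.refl _ e) _ hP,
    hb.sum_leavesBelow_sum_above_pathWeight h (Reaches.refl _ e), pathProd_self, one_mul]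

theorem crossBothSum_pathWeight (hacyc : NoDirectedCycle O S)
    (hb : IsFlowSplit (parentEdge O S) er b) {e : Fin n} (he : e ≠ er) :
    crossBothSum O S (fun p => pathWeight (parentEdge O S) b (p.2 0) (p.2 (Fin.last _))) e
      (parentEdge O S e) = b e := by
  have h := hR.isRootedTree hacyc
  have hstep := reaches_apply (parentEdge O S) e
  have hP : ∀ p, IsLeafPath O S p ∧ Crosses p e ∧ Crosses p (parentEdge O S e) ↔
      IsLeafPath O S p ∧ Reaches (parentEdge O S) (p.2 0) e ∧
        Reaches (parentEdge O S) (parentEdge O S e) (p.2 (Fin.last _)) := by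
    refine fun p => and_congr_right fun hp => ?_
    rw [(hR.isLeafPath_iff.1 hp).2.crosses_iff h, (hR.isLeafPath_iff.1 hp).2.crosses_iff h]
    exact ⟨fun hc => ⟨hc.1.1, hc.2.2⟩,
      fun hc => ⟨⟨hc.1, hstep.trans hc.2⟩, hc.1.trans hstep, hc.2⟩⟩
  rw [crossBothSum, hR.sum_filter_leafPaths hacyc _ hstep _ hP,
    hb.sum_leavesBelow_sum_above_pathWeight h hstep,
    hstep.pathProd_eq_mul (h.apply_ne_self he).symm, pathProd_self, mul_one, hb.share_mul]

theorem exists_pathCovering (hacyc : NoDirectedCycle O S)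
    (hbin : ∀ e, inDeg S (O e) = 0 ∨ inDeg S (O e) = 2) :
    ∃ x, IsPathCovering O S x ∧ coveringCost O S x ≤ Real.logb 2 (n + 1) := by
  have h := hR.isRootedTree hacyc
  obtain ⟨b, hb, hcost⟩ := h.exists_isFlowSplit fun e he => by
    rw [hR.card_children]
    refine (hbin e).resolve_left fun h0 => ?_
    rw [← hR.card_children, card_eq_zero] at h0
    exact not_isLeaf_iff.1 he |>.ne_empty h0
  refine ⟨fun p => pathWeight (parentEdge O S) b (p.2 0) (p.2 (Fin.last _)),
    ⟨fun p => hb.pathWeight_nonneg _ _, fun e _ => ?_, fun e f hroot hf => ?_⟩, ?_⟩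
  · rw [hR.crossSum_pathWeight hacyc hb]
    linarith [hb.nonneg e]
  · have he : e ≠ er := mt hR.isRootEdge_iff.2 hroot
    obtain rfl : f = parentEdge O S e := (hR.S_eq_O_iff.1 hf.symm).2.symm
    have hsplit := hR.crossSum_eq_endSum_add_crossBothSum hacyc
      (fun p => pathWeight (parentEdge O S) b (p.2 0) (p.2 (Fin.last _))) he
    rw [hR.crossSum_pathWeight hacyc hb, hR.crossBothSum_pathWeight hacyc hb he] at hsplit
    rw [hR.crossBothSum_pathWeight hacyc hb he]
    linarith
  · have : Nonempty (Fin n) := ⟨er⟩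
    refine ciSup_le fun e => ?_
    rw [hR.crossSum_pathWeight hacyc hb]
    simpa using hcost e

end IsRootedAt

end TwoTree

/-- Every directed 2-tree with `m` nodes has a path covering of cost at most `log₂ m`. -/
theorem two_tree_path_covering {n m : ℕ} (O S : Fin n → Fin m)
    (htree : IsDirectedGTree 2 O S) :
    ∃ x : PathIdx n → ℝ, IsPathCovering O S x ∧
      coveringCost O S x ≤ Real.logb 2 m := by
  obtain ⟨hacyc, r, hin, hout, hdeg⟩ := htree
  obtain ⟨er, hR⟩ := exists_isRootedAt hin hout fun v hv => (hdeg v hv).1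
  obtain ⟨x, hx, hcost⟩ :=
    hR.exists_pathCovering hacyc fun e => (hdeg (O e) (hR.O_ne_root e)).2
  refine ⟨x, hx, hcost.trans (Real.logb_le_logb_of_le one_lt_two (by positivity) ?_)⟩
  exact_mod_cast hR.card_lt
end

section
/- Let the agents be partitioned into levels 0, 1, …, k−1 with ℓ_i ≥ 1 agents at level i, and let n_i = ℓ_0 + ℓ_1 + … + ℓ_i. The probability that a uniformly random ordering of all n_{k−1} agents has the chain-of-levels property equals ∏_{i=1}^{k−1} (1 − n_{i−1}/n_i). -/
/-!
Say level `i` is on top in an ordering when the last agent of level at most `i` has level `i`;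
the chain-of-levels property asks this for `i = 1, …, k - 1`. Condition on the agent `z` in the
last position: it is the last agent of level at most `i` whenever `lvl z ≤ i`, so levels
`1, …, j` are all on top iff either `lvl z = j` and levels `1, …, j - 1` are on top in the
remaining ordering, or `lvl z > j` and levels `1, …, j` are. Removing `z` changes neither `ℓ_i`
nor `n_i` for `i < lvl z`, so induction on the number of agents gives `n! ∏_{i=1}^{j} ℓ_i / n_i`
good orderings; finally `ℓ_i / n_i = 1 - n_{i-1} / n_i`.
-/

/-- The ordering `σ` (where `σ t` is the agent in position `t`) has the chain-of-levels
property for the level function `lvl`: for each level `i ≥ 1`, some agent of level `i`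
appears after all agents of levels `0, …, i − 1`. -/
def ChainOfLevels {n k : ℕ} (lvl : Fin n → Fin k) (σ : Equiv.Perm (Fin n)) : Prop :=
  ∀ i : Fin k, 0 < (i : ℕ) →
    ∃ t : Fin n, lvl (σ t) = i ∧ ∀ s : Fin n, (lvl (σ s) : ℕ) < (i : ℕ) → s < t

instance {n k : ℕ} (lvl : Fin n → Fin k) (σ : Equiv.Perm (Fin n)) :
    Decidable (ChainOfLevels lvl σ) := by
  unfold ChainOfLevels; infer_instance

open Finset Equiv

variable {n : ℕ}

/-- Orderings enter only through their level sequence: `f t` is the level of the agent in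
position `t`. -/
def LevelOnTop (f : Fin n → ℕ) (i : ℕ) : Prop :=
  ∃ t, f t = i ∧ ∀ s, f s < i → s < t

def ChainUpTo (f : Fin n → ℕ) (j : ℕ) : Prop :=
  ∀ i ∈ Icc 1 j, LevelOnTop f i

instance (f : Fin n → ℕ) (j : ℕ) : Decidable (ChainUpTo f j) := by
  unfold ChainUpTo LevelOnTop; infer_instance

theorem levelOnTop_iff_last {f : Fin (n + 1) → ℕ} {i : ℕ} :
    LevelOnTop f i ↔
      f (Fin.last n) = i ∨ i < f (Fin.last n) ∧ LevelOnTop (f ∘ Fin.castSucc) i := by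
  unfold LevelOnTop
  simp only [Fin.exists_fin_succ', Fin.forall_fin_succ', Fin.castSucc_lt_castSucc_iff,
    Fin.castSucc_lt_last, Function.comp_apply, lt_self_iff_false, imp_true_iff, true_and,
    imp_false, not_lt]
  rcases lt_trichotomy (f (Fin.last n)) i with h | rfl | h
  · simp [h, h.ne, h.not_gt, Fin.le_last]
  · simp
  · simp [h, h.ne', h.le]

theorem chainUpTo_succ_iff_last {f : Fin (n + 1) → ℕ} {j : ℕ} :
    ChainUpTo f (j + 1) ↔
      f (Fin.last n) = j + 1 ∧ ChainUpTo (f ∘ Fin.castSucc) j ∨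
        j + 1 < f (Fin.last n) ∧ ChainUpTo (f ∘ Fin.castSucc) (j + 1) := by
  simp only [ChainUpTo, levelOnTop_iff_last, mem_Icc]
  constructor
  · intro h
    have hm : j + 1 ≤ f (Fin.last n) := by
      rcases h (j + 1) ⟨by omega, le_rfl⟩ with h | h <;> omega
    rcases hm.eq_or_lt with hm | hm
    · exact .inl ⟨hm.symm, fun i hi => ((h i ⟨hi.1, by omega⟩).resolve_left (by omega)).2⟩
    · exact .inr ⟨hm, fun i hi => ((h i hi).resolve_left (by omega)).2⟩
  · rintro (⟨hm, h⟩ | ⟨hm, h⟩) i hi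
    · rcases hi.2.eq_or_lt with rfl | hlt
      · exact .inl hm
      · exact .inr ⟨by omega, h i ⟨hi.1, by omega⟩⟩
    · exact .inr ⟨by omega, h i hi⟩

/-- `enumCompl z` enumerates `{z}ᶜ`: it relabels the agents left after removing `z`. -/
def enumCompl (z : Fin (n + 1)) (i : Fin n) : Fin (n + 1) :=
  swap (Fin.last n) z i.castSucc

theorem card_filter_eq_card_filter_enumCompl_add (p : Fin (n + 1) → Prop) [DecidablePred p]
    (z : Fin (n + 1)) : #{a | p a} = #{i | p (enumCompl z i)} + if p z then 1 else 0 := by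
  simp only [card_filter]
  rw [← Equiv.sum_comp (swap (Fin.last n) z), Fin.sum_univ_castSucc]
  simp only [enumCompl, swap_apply_left]
  rfl

def decomposeLast : Perm (Fin (n + 1)) ≃ Fin (n + 1) × Perm (Fin n) :=
  finSuccEquivLast.permCongr.trans <|
    Perm.decomposeOption.trans <| finSuccEquivLast.symm.prodCongr (Equiv.refl _)

@[simp]
theorem decomposeLast_symm_apply_last (z : Fin (n + 1)) (τ : Perm (Fin n)) :
    decomposeLast.symm (z, τ) (Fin.last n) = z := by
  simp [decomposeLast, permCongr_apply]

@[simp]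
theorem decomposeLast_symm_apply_castSucc (z : Fin (n + 1)) (τ : Perm (Fin n)) (t : Fin n) :
    decomposeLast.symm (z, τ) t.castSucc = enumCompl z (τ t) := by
  simp [decomposeLast, enumCompl, permCongr_apply, ← finSuccEquivLast.symm.injective.swap_apply]

def chainCount (lvl : Fin n → ℕ) (j : ℕ) : ℕ :=
  #{σ : Perm (Fin n) | ChainUpTo (lvl ∘ σ) j}

theorem chainCount_zero (lvl : Fin n → ℕ) : chainCount lvl 0 = n.factorial := by
  simp [chainCount, ChainUpTo, Fintype.card_perm]

theorem chainCount_fin_zero_succ (lvl : Fin 0 → ℕ) (j : ℕ) : chainCount lvl (j + 1) = 0 := by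
  refine card_eq_zero.2 (filter_eq_empty_iff.2 fun σ _ hσ => ?_)
  obtain ⟨t, -⟩ := hσ (j + 1) (by simp)
  exact t.elim0

theorem chainCount_succ_succ (lvl : Fin (n + 1) → ℕ) (j : ℕ) :
    chainCount lvl (j + 1) =
      ∑ z with lvl z = j + 1, chainCount (lvl ∘ enumCompl z) j +
        ∑ z with j + 1 < lvl z, chainCount (lvl ∘ enumCompl z) (j + 1) := by
  have split (z : Fin (n + 1)) (τ : Perm (Fin n)) :
      ChainUpTo (lvl ∘ decomposeLast.symm (z, τ)) (j + 1) ↔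
        lvl z = j + 1 ∧ ChainUpTo ((lvl ∘ enumCompl z) ∘ τ) j ∨
          j + 1 < lvl z ∧ ChainUpTo ((lvl ∘ enumCompl z) ∘ τ) (j + 1) := by
    have hrest : (lvl ∘ decomposeLast.symm (z, τ)) ∘ Fin.castSucc = (lvl ∘ enumCompl z) ∘ τ :=
      funext fun t => by simp
    rw [chainUpTo_succ_iff_last, hrest, Function.comp_apply, decomposeLast_symm_apply_last]
  simp only [chainCount, card_filter, sum_filter]
  rw [← decomposeLast.symm.sum_comp, Fintype.sum_prod_type, ← sum_add_distrib]
  refine sum_congr rfl fun z _ => ?_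
  rcases lt_trichotomy (lvl z) (j + 1) with h | h | h
  · simp [split, h.ne, h.not_gt]
  · simp [split, h]
  · simp [split, h, h.ne']

noncomputable def chainProb (lvl : Fin n → ℕ) (j : ℕ) : ℝ :=
  ∏ i ∈ Icc 1 j, (#{a | lvl a = i} : ℝ) / #{a | lvl a ≤ i}

theorem chainProb_succ (lvl : Fin n → ℕ) (j : ℕ) :
    chainProb lvl (j + 1) = chainProb lvl j * (#{a | lvl a = j + 1} / #{a | lvl a ≤ j + 1}) :=
  prod_Icc_succ_top (by omega) _

theorem chainProb_comp_enumCompl {lvl : Fin (n + 1) → ℕ} {z : Fin (n + 1)} {j : ℕ}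
    (hz : j < lvl z) : chainProb (lvl ∘ enumCompl z) j = chainProb lvl j := by
  refine prod_congr rfl fun i hi => ?_
  have hi : i < lvl z := by rw [mem_Icc] at hi; omega
  rw [card_filter_eq_card_filter_enumCompl_add (fun a => lvl a = i) z,
    card_filter_eq_card_filter_enumCompl_add (fun a => lvl a ≤ i) z]
  simp [hi.ne', hi.not_ge]

theorem chainProb_succ_succ_recursion (lvl : Fin (n + 1) → ℕ) (j : ℕ) :
    (#{z | lvl z = j + 1} : ℝ) * chainProb lvl j + #{z | j + 1 < lvl z} * chainProb lvl (j + 1) =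
      (n + 1 : ℕ) * chainProb lvl (j + 1) := by
  have hsplit : ((n + 1 : ℕ) : ℝ) = #{a | lvl a ≤ j + 1} + #{a | j + 1 < lvl a} := by
    norm_cast
    simpa [not_le] using (card_filter_add_card_filter_not (s := univ) (lvl · ≤ j + 1)).symm
  have hle : #{a | lvl a = j + 1} ≤ #{a | lvl a ≤ j + 1} :=
    card_le_card (monotone_filter_right _ fun _ _ h => h.le)
  rw [chainProb_succ, hsplit]
  rcases Nat.eq_zero_or_pos #{a | lvl a ≤ j + 1} with hN | hN
  · simp [hN, show #{a | lvl a = j + 1} = 0 by omega]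
  · field_simp

theorem chainCount_eq (lvl : Fin n → ℕ) (j : ℕ) :
    (chainCount lvl j : ℝ) = n.factorial * chainProb lvl j := by
  induction n generalizing j with
  | zero =>
    cases j with
    | zero => simp [chainCount_zero, chainProb]
    | succ j => simp [chainCount_fin_zero_succ, chainProb_succ]
  | succ n ih =>
    cases j with
    | zero => simp [chainCount_zero, chainProb]
    | succ j =>
      have at_top (z) (hz : z ∈ ({z | lvl z = j + 1} : Finset _)) :
          (chainCount (lvl ∘ enumCompl z) j : ℝ) = n.factorial * chainProb lvl j := by
        rw [ih, chainProb_comp_enumCompl (by rw [(mem_filter.1 hz).2]; omega)]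
      have above (z) (hz : z ∈ ({z | j + 1 < lvl z} : Finset _)) :
          (chainCount (lvl ∘ enumCompl z) (j + 1) : ℝ) =
            n.factorial * chainProb lvl (j + 1) := by
        rw [ih, chainProb_comp_enumCompl (mem_filter.1 hz).2]
      rw [chainCount_succ_succ, Nat.cast_add, Nat.cast_sum, Nat.cast_sum, sum_congr rfl at_top,
        sum_congr rfl above, sum_const, sum_const, nsmul_eq_mul, nsmul_eq_mul,
        Nat.factorial_succ, Nat.cast_mul]
      linear_combination (n.factorial : ℝ) * chainProb_succ_succ_recursion lvl j

theorem card_filter_le_succ {α : Type*} [Fintype α] [DecidableEq α] (lvl : α → ℕ) (i : ℕ) :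
    #{a | lvl a ≤ i + 1} = #{a | lvl a ≤ i} + #{a | lvl a = i + 1} := by
  rw [← card_union_of_disjoint (disjoint_filter.2 fun _ _ h => by omega), ← filter_or]
  congr 1
  ext a
  simp only [mem_filter, mem_univ, true_and]
  omega

theorem chainProb_eq_prod_one_sub (lvl : Fin n → ℕ) (j : ℕ)
    (hlevels : ∀ i ∈ Icc 1 j, 0 < #{a | lvl a = i}) :
    chainProb lvl j = ∏ i ∈ Icc 1 j, (1 - (#{a | lvl a ≤ i - 1} : ℝ) / #{a | lvl a ≤ i}) := by
  refine prod_congr rfl fun i hi => ?_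
  obtain ⟨i, rfl⟩ : ∃ i', i = i' + 1 := ⟨i - 1, by rw [mem_Icc] at hi; omega⟩
  have hpos := hlevels _ hi
  rw [card_filter_le_succ, Nat.add_sub_cancel]
  push_cast
  field_simp
  ring

theorem chainOfLevels_iff_chainUpTo {k : ℕ} (lvl : Fin n → Fin k) (σ : Perm (Fin n)) :
    ChainOfLevels lvl σ ↔ ChainUpTo (fun t => (lvl (σ t) : ℕ)) (k - 1) := by
  constructor
  · intro h i hi
    rw [mem_Icc] at hi
    obtain ⟨t, ht, hs⟩ := h ⟨i, by omega⟩ hi.1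
    exact ⟨t, by simp [ht], hs⟩
  · intro h i hi
    obtain ⟨t, ht, hs⟩ := h i (mem_Icc.2 ⟨hi, by omega⟩)
    exact ⟨t, Fin.ext ht, hs⟩

theorem chain_of_levels_probability_general {n k : ℕ} (lvl : Fin n → Fin k)
    (hfull : ∀ i : Fin k, 0 < (Finset.univ.filter (fun a => lvl a = i)).card) :
    ((Finset.univ.filter (fun σ : Equiv.Perm (Fin n) => ChainOfLevels lvl σ)).card : ℝ)
        / (Nat.factorial n : ℝ) =
      ∏ i ∈ Finset.Icc 1 (k - 1),
        (1 -
          ((Finset.univ.filter (fun a : Fin n => (lvl a : ℕ) ≤ i - 1)).card : ℝ) /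
          ((Finset.univ.filter (fun a : Fin n => (lvl a : ℕ) ≤ i)).card : ℝ)) := by
  have hlevels : ∀ i ∈ Icc 1 (k - 1), 0 < #{a | (lvl a : ℕ) = i} := fun i hi => by
    simpa [Fin.ext_iff] using hfull ⟨i, by rw [mem_Icc] at hi; omega⟩
  have hcount : #{σ : Perm (Fin n) | ChainOfLevels lvl σ} =
      chainCount (fun a => (lvl a : ℕ)) (k - 1) := by
    simp only [chainCount, chainOfLevels_iff_chainUpTo]
    rfl
  rw [hcount, chainCount_eq, mul_div_cancel_left₀ _ (by positivity),
    chainProb_eq_prod_one_sub _ _ hlevels]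

/-- The probability that a uniformly random ordering of agents partitioned into levels
`0, …, k − 1` (each level nonempty) has the chain-of-levels property equals
`∏_{i = 1}^{k − 1} (1 − n_{i−1} / n_i)`, where `n_i` is the number of agents in levels
`0` through `i`. -/
theorem chain_of_levels_probability {n k : ℕ} (hk : 0 < k) (lvl : Fin n → Fin k)
    (hfull : ∀ i : Fin k, 0 < (Finset.univ.filter (fun a => lvl a = i)).card) :
    ((Finset.univ.filter (fun σ : Equiv.Perm (Fin n) => ChainOfLevels lvl σ)).card : ℝ)
        / (Nat.factorial n : ℝ) =
      ∏ i ∈ Finset.Icc 1 (k - 1),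
        (1 -
          ((Finset.univ.filter (fun a : Fin n => (lvl a : ℕ) ≤ i - 1)).card : ℝ) /
          ((Finset.univ.filter (fun a : Fin n => (lvl a : ℕ) ≤ i)).card : ℝ)) :=
  chain_of_levels_probability_general lvl hfull
end

section
/- For the facility assignment problem with m = 2 facilities, every truthful-in-expectation randomized mechanism M has approximation ratio at least 3 without resource augmentation: for every α < 3 there exist an instance on the real line (number of agents n, facility positions, capacities, and agent points) on which the expected social cost of M exceeds α times the minimum social cost of any assignment on that instance. -/
/-- A randomized mechanism for facility assignment with two facilities on the real
line: for each number `n` of agents, facility positions `F`, capacities `c`, and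
reported points `A`, it outputs a probability distribution over assignments
(represented by its probability mass function), supported on capacity-respecting
assignments whenever the total capacity suffices, and it is truthful-in-expectation:
no agent can strictly decrease her expected distance to her assigned facility by
misreporting her point. -/
structure TwoFacTruthfulMechanism where
  out : ∀ (n : ℕ), (Fin 2 → ℝ) → (Fin 2 → ℕ) → (Fin n → ℝ) → (Fin n → Fin 2) → ℝ
  nonneg : ∀ (n : ℕ) (F : Fin 2 → ℝ) (c : Fin 2 → ℕ) (A : Fin n → ℝ)
    (S : Fin n → Fin 2), 0 ≤ out n F c A S
  total_one : ∀ (n : ℕ) (F : Fin 2 → ℝ) (c : Fin 2 → ℕ) (A : Fin n → ℝ),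
    n ≤ c 0 + c 1 → ∑ S : Fin n → Fin 2, out n F c A S = 1
  supp_valid : ∀ (n : ℕ) (F : Fin 2 → ℝ) (c : Fin 2 → ℕ) (A : Fin n → ℝ)
    (S : Fin n → Fin 2), n ≤ c 0 + c 1 → out n F c A S ≠ 0 →
    ∀ j : Fin 2, (Finset.univ.filter (fun i => S i = j)).card ≤ c j
  truthful : ∀ (n : ℕ) (F : Fin 2 → ℝ) (c : Fin 2 → ℕ), n ≤ c 0 + c 1 →
    ∀ (A : Fin n → ℝ) (i : Fin n) (a' : ℝ),
      ∑ S : Fin n → Fin 2, out n F c A S * dist (A i) (F (S i)) ≤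
        ∑ S : Fin n → Fin 2, out n F c (Function.update A i a') S * dist (A i) (F (S i))


/-! Put facilities at `0` and `2` with capacities `1` and `N`, and `N + 1` agents. Every feasible
assignment sends exactly one agent to `0`, so when all agents sit at `2` some agent `k` is sent to
`0` with probability at most `1 / (N + 1)`. Move `k` to `x = 1 + 1 / (N + 1)`. She prefers the
facility at `2`, so her expected distance grows with her probability of being sent to `0`, and
truthfulness (against the misreport `2`) keeps that probability at most `1 / (N + 1)`. The optimum
sends `k` to `0` at cost `x ≈ 1`; every other feasible assignment costs `4 - x ≈ 3`. -/

open Finset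

theorem dist_eq_dist_one_add_indicator (F : Fin 2 → ℝ) (x : ℝ) (s : Fin 2) :
    dist x (F s) = dist x (F 1) + (dist x (F 0) - dist x (F 1)) * if s = 0 then 1 else 0 := by
  fin_cases s <;> simp

theorem dist_two_lt_dist_zero {x : ℝ} (hx : 1 < x) : dist x 2 < dist x 0 := by
  rw [Real.dist_eq, Real.dist_eq, sub_zero, abs_sub_lt_iff]
  constructor <;> linarith [le_abs_self x]

theorem sum_mul_add_mul {ι : Type*} [Fintype ι] {w : ι → ℝ} (hw : ∑ i, w i = 1)
    (a b : ℝ) (g : ι → ℝ) : ∑ i, w i * (a + b * g i) = a + b * ∑ i, w i * g i := by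
  simp only [mul_add, sum_add_distrib, ← sum_mul, hw, mul_left_comm _ b, ← mul_sum, one_mul]

def RespectsCapacity {n : ℕ} (c : Fin 2 → ℕ) (S : Fin n → Fin 2) : Prop :=
  ∀ j, (univ.filter (fun i => S i = j)).card ≤ c j

theorem card_filter_eq_zero_of_respectsCapacity {N : ℕ} {S : Fin (N + 1) → Fin 2}
    (hS : RespectsCapacity ![1, N] S) : (univ.filter (fun i => S i = 0)).card = 1 := by
  have hsplit := card_eq_sum_card_fiberwise (f := S) (s := univ) (t := univ) (by simp)
  have h0 := hS 0
  have h1 := hS 1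
  simp only [Fin.sum_univ_two, card_univ, Fintype.card_fin] at hsplit h0 h1
  simp only [Matrix.cons_val_zero, Matrix.cons_val_one] at h0 h1
  omega

theorem respectsCapacity_ite {N : ℕ} (k : Fin (N + 1)) :
    RespectsCapacity ![1, N] (fun i => if i = k then 0 else 1) := by
  intro j
  fin_cases j <;> simp [filter_eq', filter_ne']

theorem sum_dist_update_const {n : ℕ} (k : Fin n) {x : ℝ} (hx0 : 0 ≤ x) (hx2 : x ≤ 2)
    {S : Fin n → Fin 2} (hS : (univ.filter (fun i => S i = 0)).card = 1) :
    ∑ i, dist (Function.update (fun _ => (2 : ℝ)) k x i) (![0, 2] (S i)) =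
      (4 - x) + (2 * x - 4) * if S k = 0 then 1 else 0 := by
  have hterm : ∀ i, dist (Function.update (fun _ => (2 : ℝ)) k x i) (![0, 2] (S i)) =
      2 * (if S i = 0 then 1 else 0) +
        if i = k then (2 - x) + (2 * x - 4) * (if S k = 0 then 1 else 0) else 0 := by
    intro i
    rw [dist_eq_dist_one_add_indicator]
    by_cases hik : i = k
    · subst hik
      simp only [Function.update_self, Matrix.cons_val_one, Matrix.cons_val_fin_one,
        Matrix.cons_val_zero, Real.dist_eq, sub_zero, abs_of_nonneg hx0,
        abs_of_nonpos (sub_nonpos.2 hx2), neg_sub, ↓reduceIte]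
      split_ifs <;> ring
    · simp [hik]
  simp only [hterm, sum_add_distrib, ← mul_sum, sum_boole, hS, sum_ite_eq', mem_univ, if_true]
  push_cast
  ring

/-- `x` is where the deviating agent sits and `p ≤ 1 / (N + 1)` the probability that she is sent
to facility `0`: `x` is then the optimum and `4 - x + (2 * x - 4) * p` the expected cost. -/
theorem exists_instance_parameters {α : ℝ} (hα : α < 3) :
    ∃ (N : ℕ) (x : ℝ), 1 < x ∧ x ≤ 2 ∧
      ∀ p : ℝ, 0 ≤ p → p ≤ 1 / ((N : ℝ) + 1) → α * x < 4 - x + (2 * x - 4) * p := by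
  obtain ⟨N, hN⟩ := exists_nat_gt ((3 + α) / (3 - α))
  set m : ℝ := N + 1
  have hm1 : 1 ≤ m := le_add_of_nonneg_left N.cast_nonneg
  have hm : 3 + α < m * (3 - α) := (div_lt_iff₀ (by linarith)).1 (hN.trans (lt_add_one _))
  have hinv : 0 < 1 / m ∧ 1 / m ≤ 1 := ⟨by positivity, div_le_one_of_le₀ hm1 (by positivity)⟩
  refine ⟨N, 1 + 1 / m, by linarith, by linarith, fun p hp0 hp => ?_⟩
  have hpm : p * m ≤ 1 := by rwa [le_div_iff₀ (by positivity)] at hp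
  have key : (4 - (1 + 1 / m) + (2 * (1 + 1 / m) - 4) * p - α * (1 + 1 / m)) * m =
      m * (3 - α) - (3 + α) + 2 * (1 - p * m) + 2 * p := by
    field_simp
    ring
  have hpos : 0 < (4 - (1 + 1 / m) + (2 * (1 + 1 / m) - 4) * p - α * (1 + 1 / m)) * m := by
    rw [key]; linarith
  exact sub_pos.1 (pos_of_mul_pos_left hpos (by positivity))

namespace TwoFacTruthfulMechanism

variable (M : TwoFacTruthfulMechanism) {n : ℕ} (F : Fin 2 → ℝ) (c : Fin 2 → ℕ)

def probZero (A : Fin n → ℝ) (i : Fin n) : ℝ :=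
  ∑ S : Fin n → Fin 2, M.out n F c A S * if S i = 0 then 1 else 0

theorem probZero_nonneg (A : Fin n → ℝ) (i : Fin n) : 0 ≤ M.probZero F c A i :=
  sum_nonneg fun S _ => mul_nonneg (M.nonneg n F c A S) (by split_ifs <;> norm_num)

variable {c}

theorem sum_out_mul_congr (hc : n ≤ c 0 + c 1) (A : Fin n → ℝ) {g h : (Fin n → Fin 2) → ℝ}
    (hgh : ∀ S, RespectsCapacity c S → g S = h S) :
    ∑ S, M.out n F c A S * g S = ∑ S, M.out n F c A S * h S := by
  refine sum_congr rfl fun S _ => ?_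
  by_cases hS : M.out n F c A S = 0
  · simp [hS]
  · rw [hgh S (M.supp_valid n F c A S hc hS)]

theorem sum_out_mul_add_mul_indicator (hc : n ≤ c 0 + c 1) (A : Fin n → ℝ) (i : Fin n)
    (a b : ℝ) :
    ∑ S, M.out n F c A S * (a + b * if S i = 0 then 1 else 0) = a + b * M.probZero F c A i :=
  sum_mul_add_mul (M.total_one n F c A hc) a b _

theorem expectedDist_eq (hc : n ≤ c 0 + c 1) (A : Fin n → ℝ) (i : Fin n) (x : ℝ) :
    ∑ S, M.out n F c A S * dist x (F (S i)) =
      dist x (F 1) + (dist x (F 0) - dist x (F 1)) * M.probZero F c A i := by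
  rw [sum_congr rfl fun S _ => congrArg _ (dist_eq_dist_one_add_indicator F x (S i))]
  exact M.sum_out_mul_add_mul_indicator F hc A i _ _

theorem probZero_le_update (hc : n ≤ c 0 + c 1) {A : Fin n → ℝ} {i : Fin n}
    (hi : dist (A i) (F 1) < dist (A i) (F 0)) (a' : ℝ) :
    M.probZero F c A i ≤ M.probZero F c (Function.update A i a') i := by
  have h := M.truthful n F c hc A i a'
  rw [M.expectedDist_eq F hc, M.expectedDist_eq F hc] at h
  exact le_of_mul_le_mul_left (by linarith) (sub_pos.2 hi)

theorem probZero_update_const_le (hc : n ≤ c 0 + c 1) (k : Fin n) {x : ℝ}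
    (hx : dist x (F 1) < dist x (F 0)) (y : ℝ) :
    M.probZero F c (Function.update (fun _ => y) k x) k ≤ M.probZero F c (fun _ => y) k := by
  simpa [Function.update_idem] using
    M.probZero_le_update F hc (A := Function.update (fun _ => y) k x) (i := k) (by simpa using hx) y

theorem exists_probZero_le {N : ℕ} (A : Fin (N + 1) → ℝ) :
    ∃ k, M.probZero F ![1, N] A k ≤ 1 / (N + 1) := by
  have hc : N + 1 ≤ (![1, N] : Fin 2 → ℕ) 0 + (![1, N] : Fin 2 → ℕ) 1 := by simp [add_comm]
  have hsum : ∑ k, M.probZero F ![1, N] A k = ∑ _k : Fin (N + 1), (1 / (N + 1) : ℝ) := calc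
    ∑ k, M.probZero F ![1, N] A k = ∑ S, M.out (N + 1) F ![1, N] A S * 1 := by
      simp only [probZero, sum_comm (γ := Fin (N + 1)), ← mul_sum, sum_boole]
      exact M.sum_out_mul_congr F hc A fun S hS => by
        simp [card_filter_eq_zero_of_respectsCapacity hS]
    _ = _ := by simp [M.total_one _ F _ A hc, mul_inv_cancel₀ (Nat.cast_add_one_ne_zero (R := ℝ) N)]
  obtain ⟨k, -, hk⟩ := exists_le_of_sum_le univ_nonempty hsum.le
  exact ⟨k, hk⟩

end TwoFacTruthfulMechanism

open TwoFacTruthfulMechanism in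
/-- Every truthful-in-expectation randomized mechanism for facility assignment with two
facilities has approximation ratio at least 3 (without resource augmentation): for every
`α < 3` there is an instance on the real line on which the mechanism's expected social
cost exceeds `α` times the minimum social cost. -/
theorem two_facilities_truthful_lower_bound (M : TwoFacTruthfulMechanism)
    (α : ℝ) (hα : α < 3) :
    ∃ (n : ℕ) (F : Fin 2 → ℝ) (c : Fin 2 → ℕ) (A : Fin n → ℝ),
      n ≤ c 0 + c 1 ∧
      ∃ O : Fin n → Fin 2,
        (∀ j : Fin 2, (Finset.univ.filter (fun i => O i = j)).card ≤ c j) ∧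
        (∀ O' : Fin n → Fin 2,
          (∀ j : Fin 2, (Finset.univ.filter (fun i => O' i = j)).card ≤ c j) →
          ∑ i, dist (A i) (F (O i)) ≤ ∑ i, dist (A i) (F (O' i))) ∧
        α * ∑ i, dist (A i) (F (O i)) <
          ∑ S : Fin n → Fin 2, M.out n F c A S * ∑ i, dist (A i) (F (S i)) := by
  obtain ⟨N, x, hx1, hx2, hgap⟩ := exists_instance_parameters hα
  set F : Fin 2 → ℝ := ![0, 2]
  have hc : N + 1 ≤ (![1, N] : Fin 2 → ℕ) 0 + ![1, N] 1 := by simp [add_comm]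
  obtain ⟨k, hk⟩ := M.exists_probZero_le F (fun _ => 2)
  set A := Function.update (fun _ => (2 : ℝ)) k x
  have hcost : ∀ S, RespectsCapacity ![1, N] S →
      ∑ i, dist (A i) (F (S i)) = (4 - x) + (2 * x - 4) * if S k = 0 then 1 else 0 :=
    fun S hS => sum_dist_update_const k (by linarith) hx2
      (card_filter_eq_zero_of_respectsCapacity hS)
  have hp : M.probZero F ![1, N] A k ≤ 1 / (N + 1) :=
    (M.probZero_update_const_le F hc k (dist_two_lt_dist_zero hx1) 2).trans hk
  have hO := respectsCapacity_ite k
  refine ⟨N + 1, F, ![1, N], A, hc, _, hO, fun O' hO' => ?_, ?_⟩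
  · rw [hcost _ hO, hcost _ hO']
    simp only [↓reduceIte]
    split_ifs <;> linarith
  · rw [M.sum_out_mul_congr F hc A hcost, M.sum_out_mul_add_mul_indicator F hc A k, hcost _ hO]
    simp only [↓reduceIte, mul_one, show 4 - x + (2 * x - 4) = x by ring]
    exact hgap _ (M.probZero_nonneg F _ A k) hp
end
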